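/- arXiv:math/0508180 — 10 statements merged into one kernel-verified Lean document; each statement's English description precedes it below -/
import Mathlib

section
/- Define σ : ℕ × ℕ → ℕ recursively by σ(0,n) = 1 for all n, and σ(m+1,n) = |Σ_{i=0}^{n} (−1)^i σ(m,i)| (the absolute value of the alternating sum). Then for all natural numbers k and l one has σ(2k,2l) = binomial(k+l, k), σ(2k,2l+1) = binomial(k+l, k), and σ(2k+1,2l+1) = 0. -/
private lemma alt_sum_pair (σ : ℕ → ℕ → ℕ) (m : ℕ) (c : ℕ → ℕ)
    (h : ∀ l, σ m (2 * l) = c l ∧ σ m (2 * l + 1) = c l) :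
    ∀ l, (∑ i ∈ Finset.range (2 * l + 1), (-1 : ℤ) ^ i * (σ m i : ℤ)) = c l ∧
         (∑ i ∈ Finset.range (2 * l + 2), (-1 : ℤ) ^ i * (σ m i : ℤ)) = 0 := by
  intro l
  induction l with
  | zero =>
    have h1 := (h 0).1
    have h2 := (h 0).2
    simp only [Nat.mul_zero, Nat.zero_add] at h1 h2 ⊢
    constructor
    · simp [Finset.sum_range_succ, h1]
    · simp [Finset.sum_range_succ, h1, h2]
  | succ n ih =>
    have e1 : 2 * (n + 1) + 1 = (2 * n + 2) + 1 := by ring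
    have e2 : 2 * (n + 1) + 2 = (2 * n + 2) + 1 + 1 := by ring
    have hs1 : σ m (2 * n + 2) = c (n + 1) := by
      have := (h (n + 1)).1; rwa [show 2 * (n+1) = 2*n+2 by ring] at this
    have hs2 : σ m (2 * n + 3) = c (n + 1) := by
      have := (h (n + 1)).2; rwa [show 2 * (n+1) + 1 = 2*n+3 by ring] at this
    have p1 : ((-1 : ℤ)) ^ (2 * n + 2) = 1 := by
      rw [show 2*n+2 = 2*(n+1) by ring, pow_mul]; norm_num
    have p2 : ((-1 : ℤ)) ^ (2 * n + 3) = -1 := by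
      rw [show 2*n+3 = 2*(n+1)+1 by ring, pow_succ, pow_mul]; norm_num
    constructor
    · rw [e1, Finset.sum_range_succ, ih.2, hs1, p1]; ring
    · rw [e2, Finset.sum_range_succ, Finset.sum_range_succ, ih.2, hs1, hs2, p1,
        show (2*n+2)+1 = 2*n+3 by ring, p2]
      ring

private lemma alt_sum_zero (σ : ℕ → ℕ → ℕ) (m : ℕ) (c : ℕ → ℕ)
    (h : ∀ l, σ m (2 * l) = c l ∧ σ m (2 * l + 1) = 0) :
    ∀ l, (∑ i ∈ Finset.range (2 * l + 1), (-1 : ℤ) ^ i * (σ m i : ℤ))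
            = ∑ j ∈ Finset.range (l + 1), (c j : ℤ) ∧
         (∑ i ∈ Finset.range (2 * l + 2), (-1 : ℤ) ^ i * (σ m i : ℤ))
            = ∑ j ∈ Finset.range (l + 1), (c j : ℤ) := by
  intro l
  induction l with
  | zero =>
    have h1 := (h 0).1
    have h2 := (h 0).2
    simp only [Nat.mul_zero, Nat.zero_add] at h1 h2 ⊢
    constructor
    · simp [Finset.sum_range_succ, h1]
    · simp [Finset.sum_range_succ, h1, h2]
  | succ n ih =>
    have hs1 : σ m (2 * n + 2) = c (n + 1) := by
      have := (h (n + 1)).1; rwa [show 2 * (n+1) = 2*n+2 by ring] at this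
    have hs2 : σ m (2 * n + 3) = 0 := by
      have := (h (n + 1)).2; rwa [show 2 * (n+1) + 1 = 2*n+3 by ring] at this
    have p1 : ((-1 : ℤ)) ^ (2 * n + 2) = 1 := by
      rw [show 2*n+2 = 2*(n+1) by ring, pow_mul]; norm_num
    constructor
    · rw [show 2*(n+1)+1 = (2*n+2)+1 by ring, Finset.sum_range_succ, ih.2, hs1, p1]
      conv_rhs => rw [show n+1+1 = (n+1)+1 by ring, Finset.sum_range_succ]
      ring
    · rw [show 2*(n+1)+2 = ((2*n+2)+1)+1 by ring, Finset.sum_range_succ,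
        Finset.sum_range_succ, ih.2, hs1, hs2, p1]
      conv_rhs => rw [show n+1+1 = (n+1)+1 by ring, Finset.sum_range_succ]
      push_cast
      rw [show (2*n+2)+1 = 2*n+3 by ring]
      push_cast [show (2*n+3) = 2*(n+1)+1 by ring, pow_succ, pow_mul]
      ring

private lemma hockey (k : ℕ) : ∀ l, ∑ j ∈ Finset.range (l + 1), Nat.choose (k + j) k
    = Nat.choose (k + l + 1) (k + 1) := by
  intro l
  induction l with
  | zero => simp
  | succ n ih =>
    rw [Finset.sum_range_succ, ih, show k + (n+1) = (k + n) + 1 by ring]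
    rw [show k + n + 1 + 1 = (k + n + 1) + 1 by ring]
    rw [Nat.choose_succ_succ (k + n + 1) k]
    simp [Nat.succ_eq_add_one]
    omega

/-- The recursively defined signature `σ(m,n)` of the staircase triangulation of
`Δ_m × Δ_n`: `σ(0,n) = 1` and `σ(m+1,n) = |∑_{i=0}^{n} (-1)^i σ(m,i)|`. -/
theorem staircase_signature_closed_form (σ : ℕ → ℕ → ℕ)
    (h0 : ∀ n, σ 0 n = 1)
    (hrec : ∀ m n, σ (m + 1) n =
      (∑ i ∈ Finset.range (n + 1), (-1 : ℤ) ^ i * (σ m i : ℤ)).natAbs) :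
    ∀ k l : ℕ,
      σ (2 * k) (2 * l) = Nat.choose (k + l) k ∧
      σ (2 * k) (2 * l + 1) = Nat.choose (k + l) k ∧
      σ (2 * k + 1) (2 * l + 1) = 0 := by
  -- main invariant
  have P : ∀ k, ∀ l, σ (2 * k) (2 * l) = Nat.choose (k + l) k ∧
      σ (2 * k) (2 * l + 1) = Nat.choose (k + l) k := by
    intro k
    induction k with
    | zero => intro l; simp [h0]
    | succ n ih =>
      -- step 1 : odd level 2n+1
      have A := alt_sum_pair σ (2 * n) (fun l => Nat.choose (n + l) n) ih
      have odd : ∀ l, σ (2 * n + 1) (2 * l) = Nat.choose (n + l) n ∧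
          σ (2 * n + 1) (2 * l + 1) = 0 := by
        intro l
        constructor
        · rw [hrec, (A l).1]; simp
        · rw [hrec, show 2*l+1+1 = 2*l+2 by ring, (A l).2]; simp
      -- step 2 : even level 2n+2
      have B := alt_sum_zero σ (2 * n + 1) (fun l => Nat.choose (n + l) n) odd
      intro l
      have hsum : (∑ j ∈ Finset.range (l + 1), ((Nat.choose (n + j) n : ℕ) : ℤ))
          = (Nat.choose (n + l + 1) (n + 1) : ℤ) := by
        rw [← Nat.cast_sum, hockey n l]
      have e : 2 * (n + 1) = (2 * n + 1) + 1 := by ring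
      constructor
      · rw [e, hrec, (B l).1, hsum]
        simp [show n + 1 + l = n + l + 1 by ring]
      · rw [e, hrec, show 2*l+1+1 = 2*l+2 by ring, (B l).2, hsum]
        simp [show n + 1 + l = n + l + 1 by ring]
  intro k l
  refine ⟨(P k l).1, (P k l).2, ?_⟩
  have A := alt_sum_pair σ (2 * k) (fun l => Nat.choose (k + l) k) (P k)
  rw [hrec, show 2*l+1+1 = 2*l+2 by ring, (A l).2]
  simp
end

section
/- Define σ : ℕ × ℕ → ℕ recursively by σ(0,n) = 1 for all n, and σ(m+1,n) = |Σ_{i=0}^{n} (−1)^i σ(m,i)|. Then for all m ≥ 1 and n ≥ 1 the absolute value in the recursion can be resolved: as integers, σ(m,n) = σ(m,n−1) + (−1)^n · σ(m−1,n). -/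
/-- For the recursively defined signature `σ(m,n)` of the staircase triangulation
(`σ(0,n) = 1` and `σ(m+1,n) = |∑_{i=0}^{n} (-1)^i σ(m,i)|`), the absolute value in
the recursion can be resolved: for `m, n ≥ 1`, as integers,
`σ(m,n) = σ(m,n-1) + (-1)^n · σ(m-1,n)`. -/
theorem staircase_signature_recursion (σ : ℕ → ℕ → ℕ)
    (h0 : ∀ n, σ 0 n = 1)
    (hrec : ∀ m n, σ (m + 1) n =
      (∑ i ∈ Finset.range (n + 1), (-1 : ℤ) ^ i * (σ m i : ℤ)).natAbs) :
    ∀ m n : ℕ, 1 ≤ m → 1 ≤ n →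
      (σ m n : ℤ) = (σ m (n - 1) : ℤ) + (-1 : ℤ) ^ n * (σ (m - 1) n : ℤ) := by
  have key : ∀ m n, 0 ≤ ∑ i ∈ Finset.range (n + 1), (-1 : ℤ) ^ i * (σ m i : ℤ) := by
    intro m
    induction m with
    | zero =>
      intro n
      induction n using Nat.twoStepInduction with
      | zero => simp [h0]
      | one => simp [Finset.sum_range_succ, h0]
      | more n ih _ =>
        rw [Finset.sum_range_succ, Finset.sum_range_succ]
        have : ((-1 : ℤ)) ^ (n+1) * (σ 0 (n+1) : ℤ) + (-1:ℤ)^(n+2) * (σ 0 (n+2) : ℤ) = 0 := by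
          simp [h0, pow_succ]
        linarith
    | succ m ih =>
      have hc : ∀ i, (σ (m+1) i : ℤ) = ∑ j ∈ Finset.range (i + 1), (-1 : ℤ) ^ j * (σ m j : ℤ) := by
        intro i
        rw [hrec]
        exact Int.natAbs_of_nonneg (ih i)
      intro n
      induction n using Nat.twoStepInduction with
      | zero => simp [hc]
      | one =>
        rw [Finset.sum_range_succ, Finset.sum_range_succ, hc 0, hc 1]
        have : (0:ℤ) ≤ (σ m 1 : ℤ) := Int.natCast_nonneg _
        simp [Finset.sum_range_succ, pow_succ]
      | more n ihn _ =>
        have he : ((-1:ℤ))^n * (-1:ℤ)^n = 1 := by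
          rw [← pow_add]; exact Even.neg_one_pow ⟨n, rfl⟩
        have h1 : (σ (m+1) (n+2) : ℤ) = (σ (m+1) (n+1) : ℤ) + (-1:ℤ)^(n+2) * (σ m (n+2) : ℤ) := by
          rw [hc (n+2), hc (n+1), Finset.sum_range_succ]
        have h2 : (0:ℤ) ≤ (σ m (n+2) : ℤ) := Int.natCast_nonneg _
        have h3 : ∑ i ∈ Finset.range (n+2+1), (-1:ℤ)^i * (σ (m+1) i : ℤ)
            = (∑ i ∈ Finset.range (n+1), (-1:ℤ)^i * (σ (m+1) i : ℤ)) + (σ m (n+2) : ℤ) := by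
          rw [Finset.sum_range_succ, Finset.sum_range_succ, h1]
          linear_combination ((σ m (n+2)) : ℤ) * he
        rw [h3]
        linarith
  intro m n hm hn
  rcases m with _ | k
  · omega
  rcases n with _ | l
  · omega
  have hc : ∀ i, (σ (k+1) i : ℤ) = ∑ j ∈ Finset.range (i + 1), (-1 : ℤ) ^ j * (σ k j : ℤ) := by
    intro i
    rw [hrec]
    exact Int.natAbs_of_nonneg (key k i)
  simp only [Nat.succ_sub_one]
  rw [hc (l+1), hc l, Finset.sum_range_succ]
end

section
/- Let m, n be natural numbers and let P and Q be two distinct staircases from (0,0) to (m,n), encoded by the m-element subsets F_P and F_Q of {0,…,m+n−1} given by the positions of their (1,0)-steps. Then the sets of lattice points visited by P and by Q share exactly m+n points (i.e. |{p_0,…,p_{m+n}} ∩ {q_0,…,q_{m+n}}| = m+n) if and only if Σ_{k=1}^{m} |s(F_P)_k − s(F_Q)_k| = 1, i.e. the vectors s(F_P) and s(F_Q) differ in exactly one coordinate and there by exactly 1. -/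
/-
For each time `t` a staircase visits exactly one point of coordinate sum `t`, and that point is
determined by its first coordinate `x(t)`, the number of `(1,0)`-steps taken before time `t`.
Hence `P` and `Q` share `m + n` points iff `x_P` and `x_Q` differ at exactly one time; as both
start at `0` and grow by `0` or `1` per step, this happens iff `∑ₜ |x_P(t) - x_Q(t)| = 1`.
That sum is the area between the two paths. Counted column by column instead, the area is
`∑ₖ |f_k^P - f_k^Q| = ∑ₖ |s(F_P)_k - s(F_Q)_k|`, because the `k`-th right step is taken at or
before time `t` exactly when `k < x(t + 1)`.
-/

/-- A staircase from `(0,0)` to `(m,n)`. -/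
def IsStaircase (m n : ℕ) (p : Fin (m + n + 1) → ℕ × ℕ) : Prop :=
  p 0 = (0, 0) ∧ p (Fin.last (m + n)) = (m, n) ∧
    ∀ t : Fin (m + n), p t.succ = p t.castSucc + (1, 0) ∨ p t.succ = p t.castSucc + (0, 1)

/-- The set of indices `t` at which the staircase `p` makes a `(1,0)`-step
(the encoding of a staircase as an `m`-element subset of `{0,…,m+n-1}`). -/
def rightSteps (m n : ℕ) (p : Fin (m + n + 1) → ℕ × ℕ) : Finset (Fin (m + n)) :=
  Finset.univ.filter fun t => (p t.succ).1 = (p t.castSucc).1 + 1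

/-- The vector `s(F)` associated with a staircase: its (0-indexed) `k`-th entry is the
`k`-th smallest element `f_k` of the set `F` of `(1,0)`-step positions, minus `k`. -/
def sVec (m n : ℕ) (p : Fin (m + n + 1) → ℕ × ℕ) : Fin m → ℕ :=
  fun k => (((rightSteps m n p).sort (· ≤ ·)).map Fin.val).getD (k : ℕ) 0 - (k : ℕ)

open Finset

theorem natAbs_sub_eq_card_filter_not_iff {N a b : ℕ} (ha : a ≤ N) (hb : b ≤ N) :
    ((a : ℤ) - b).natAbs = #{t : Fin N | ¬((t : ℕ) < a ↔ (t : ℕ) < b)} := by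
  rw [card_filter, Fin.sum_univ_eq_sum_range (fun t => if ¬(t < a ↔ t < b) then 1 else 0),
    ← card_filter]
  have : {t ∈ range N | ¬(t < a ↔ t < b)} = Ico (min a b) (max a b) := by
    ext t
    simp only [mem_filter, mem_range, mem_Ico]
    omega
  rw [this, Nat.card_Ico]
  omega

namespace Finset

variable {α : Type*} [LinearOrder α] (s : Finset α) {k : ℕ} (h : s.card = k)

theorem card_filter_lt_orderEmbOfFin (i : Fin k) : #{x ∈ s | x < s.orderEmbOfFin h i} = i := by
  have : {x ∈ s | x < s.orderEmbOfFin h i} = (Iio i).map (s.orderEmbOfFin h).toEmbedding := by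
    ext x
    simp only [mem_filter, mem_map, mem_Iio]
    constructor
    · rintro ⟨hx, hlt⟩
      obtain ⟨j, rfl⟩ : x ∈ Set.range (s.orderEmbOfFin h) := by
        rw [range_orderEmbOfFin]; exact hx
      exact ⟨j, (s.orderEmbOfFin h).lt_iff_lt.mp hlt, rfl⟩
    · rintro ⟨j, hj, rfl⟩
      exact ⟨orderEmbOfFin_mem s h j, (s.orderEmbOfFin h).lt_iff_lt.mpr hj⟩
  rw [this, card_map, Fin.card_Iio]

theorem orderEmbOfFin_le_iff (i : Fin k) (a : α) :
    s.orderEmbOfFin h i ≤ a ↔ (i : ℕ) < #{x ∈ s | x ≤ a} := by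
  rw [← card_filter_lt_orderEmbOfFin s h i]
  constructor
  · intro hle
    refine card_lt_card ⟨fun x hx => ?_, fun hsub => ?_⟩
    · simp only [mem_filter] at hx ⊢
      exact ⟨hx.1, hx.2.le.trans hle⟩
    · have := hsub (mem_filter.mpr ⟨orderEmbOfFin_mem s h i, hle⟩)
      exact (mem_filter.mp this).2.false
  · intro hlt
    by_contra! hgt
    refine hlt.not_ge (card_le_card fun x hx => ?_)
    simp only [mem_filter] at hx ⊢
    exact ⟨hx.1, hx.2.trans_lt hgt⟩

end Finset

theorem card_filter_ne_eq_one_iff_sum_natAbs_sub_eq_one {N : ℕ} {a b : Fin (N + 1) → ℕ}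
    (h0 : a 0 = b 0) (ha : ∀ t : Fin N, a t.succ = a t.castSucc ∨ a t.succ = a t.castSucc + 1)
    (hb : ∀ t : Fin N, b t.succ = b t.castSucc ∨ b t.succ = b t.castSucc + 1) :
    #{t | a t ≠ b t} = 1 ↔ ∑ t, ((a t : ℤ) - b t).natAbs = 1 := by
  constructor
  · intro h
    obtain ⟨t₀, ht₀⟩ := card_eq_one.mp h
    have hne : ∀ t, a t ≠ b t ↔ t = t₀ := fun t => by
      simpa using congrArg (t ∈ ·) ht₀
    obtain ⟨s, rfl⟩ : ∃ s : Fin N, s.succ = t₀ := by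
      refine Fin.exists_succ_eq.mpr fun h => ?_
      exact (hne 0).mpr h.symm h0
    have hs : a s.castSucc = b s.castSucc := by
      by_contra hab
      exact Fin.castSucc_lt_succ.ne ((hne _).mp hab)
    rw [sum_eq_single_of_mem s.succ (mem_univ _) fun t _ ht => by
      simp [not_not.mp (mt (hne t).mp ht)]]
    have := (hne s.succ).mpr rfl
    rcases ha s with h1 | h1 <;> rcases hb s with h2 | h2 <;> omega
  · intro h
    have hle : #{t | a t ≠ b t} ≤ 1 := by
      calc #{t | a t ≠ b t} = ∑ t, if a t ≠ b t then 1 else 0 := card_filter _ _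
        _ ≤ ∑ t, ((a t : ℤ) - b t).natAbs := sum_le_sum fun t _ => by split_ifs <;> omega
        _ = 1 := h
    obtain ⟨t, -, ht⟩ := exists_ne_zero_of_sum_ne_zero (h.symm ▸ one_ne_zero)
    have : 0 < #{t | a t ≠ b t} :=
      card_pos.mpr ⟨t, by simp only [mem_filter, mem_univ, true_and]; omega⟩
    omega

namespace IsStaircase

variable {m n : ℕ} {p q : Fin (m + n + 1) → ℕ × ℕ}

theorem fst_add_snd (hp : IsStaircase m n p) (t : Fin (m + n + 1)) : (p t).1 + (p t).2 = t := by
  induction t using Fin.induction with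
  | zero => simp [hp.1]
  | succ t ih =>
    rcases hp.2.2 t with h | h <;> simp only [h, Prod.fst_add, Prod.snd_add, Fin.val_succ] <;>
      simp only [Fin.val_castSucc] at ih <;> omega

theorem fst_succ (hp : IsStaircase m n p) (t : Fin (m + n)) :
    (p t.succ).1 = (p t.castSucc).1 + if t ∈ rightSteps m n p then 1 else 0 := by
  rcases hp.2.2 t with h | h <;> simp [rightSteps, h]

theorem fst_succ_eq_or (hp : IsStaircase m n p) (t : Fin (m + n)) :
    (p t.succ).1 = (p t.castSucc).1 ∨ (p t.succ).1 = (p t.castSucc).1 + 1 := by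
  rw [hp.fst_succ]
  split_ifs <;> simp

theorem fst_eq_card (hp : IsStaircase m n p) (t : Fin (m + n + 1)) :
    (p t).1 = #{i ∈ rightSteps m n p | i.castSucc < t} := by
  induction t using Fin.induction with
  | zero => simp [hp.1]
  | succ t ih =>
    have hsplit : {i ∈ rightSteps m n p | i.castSucc < t.succ}
        = {i ∈ rightSteps m n p | i.castSucc < t.castSucc} ∪ {i ∈ rightSteps m n p | i = t} := by
      ext i
      simp only [mem_filter, mem_union, Fin.castSucc_lt_succ_iff, Fin.castSucc_lt_castSucc_iff]
      grind
    have hdisj : Disjoint {i ∈ rightSteps m n p | i.castSucc < t.castSucc}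
        {i ∈ rightSteps m n p | i = t} :=
      disjoint_filter.mpr fun i _ h => (Fin.castSucc_lt_castSucc_iff.mp h).ne
    rw [hp.fst_succ, ih, hsplit, card_union_of_disjoint hdisj, filter_eq']
    split_ifs <;> simp

theorem fst_succ_eq_card (hp : IsStaircase m n p) (t : Fin (m + n)) :
    (p t.succ).1 = #{i ∈ rightSteps m n p | i ≤ t} := by
  simp only [hp.fst_eq_card, Fin.castSucc_lt_succ_iff]

theorem card_rightSteps (hp : IsStaircase m n p) : #(rightSteps m n p) = m := by
  have := hp.fst_eq_card (Fin.last _)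
  rwa [hp.2.1, filter_true_of_mem fun i _ => Fin.castSucc_lt_last i, eq_comm] at this

theorem fst_le (hp : IsStaircase m n p) (t : Fin (m + n + 1)) : (p t).1 ≤ m := by
  rw [hp.fst_eq_card]
  exact (card_filter_le _ _).trans_eq hp.card_rightSteps

theorem injective (hp : IsStaircase m n p) : Function.Injective p := fun s t h =>
  Fin.ext (by rw [← hp.fst_add_snd s, ← hp.fst_add_snd t, h])

theorem eq_iff_fst_eq (hp : IsStaircase m n p) (hq : IsStaircase m n q) (t : Fin (m + n + 1)) :
    p t = q t ↔ (p t).1 = (q t).1 := by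
  refine ⟨congrArg Prod.fst, fun h => Prod.ext h ?_⟩
  have := hp.fst_add_snd t
  have := hq.fst_add_snd t
  omega

theorem card_image_inter_image (hp : IsStaircase m n p) (hq : IsStaircase m n q) :
    #(univ.image p ∩ univ.image q) = #{t | p t = q t} := by
  rw [← card_image_of_injective _ hp.injective]
  congr 1
  ext x
  simp only [mem_inter, mem_image, mem_filter, mem_univ, true_and]
  constructor
  · rintro ⟨⟨s, rfl⟩, t, hts⟩
    obtain rfl : t = s := Fin.ext (by rw [← hq.fst_add_snd t, ← hp.fst_add_snd s, hts])
    exact ⟨t, hts.symm, rfl⟩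
  · rintro ⟨t, ht, rfl⟩
    exact ⟨⟨t, rfl⟩, t, ht.symm⟩

theorem sVec_eq (hp : IsStaircase m n p) (k : Fin m) :
    sVec m n p k = ((rightSteps m n p).orderEmbOfFin hp.card_rightSteps k : ℕ) - k := by
  rw [sVec, List.getD_eq_getElem _ _ (by simp [hp.card_rightSteps]), List.getElem_map,
    orderEmbOfFin_apply]
  rfl

theorem le_orderEmbOfFin (hp : IsStaircase m n p) (k : Fin m) :
    (k : ℕ) ≤ (rightSteps m n p).orderEmbOfFin hp.card_rightSteps k := by
  set e := (rightSteps m n p).orderEmbOfFin hp.card_rightSteps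
  calc (k : ℕ) = #{i ∈ rightSteps m n p | i < e k} := (card_filter_lt_orderEmbOfFin _ _ k).symm
    _ ≤ #(Iio (e k)) := card_le_card fun i hi => by simpa using (mem_filter.mp hi).2
    _ = e k := Fin.card_Iio _

theorem sum_natAbs_sVec_sub (hp : IsStaircase m n p) (hq : IsStaircase m n q) :
    ∑ k, ((sVec m n p k : ℤ) - sVec m n q k).natAbs
      = ∑ t : Fin (m + n), (((p t.succ).1 : ℤ) - (q t.succ).1).natAbs := by
  set e := (rightSteps m n p).orderEmbOfFin hp.card_rightSteps
  set e' := (rightSteps m n q).orderEmbOfFin hq.card_rightSteps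
  have hk (k : Fin m) : ((sVec m n p k : ℤ) - sVec m n q k).natAbs
      = #{t : Fin (m + n) | ¬((t : ℕ) < e k ↔ (t : ℕ) < e' k)} := by
    rw [← natAbs_sub_eq_card_filter_not_iff (e k).is_lt.le (e' k).is_lt.le, hp.sVec_eq,
      hq.sVec_eq, Nat.cast_sub (hp.le_orderEmbOfFin k), Nat.cast_sub (hq.le_orderEmbOfFin k),
      sub_sub_sub_cancel_right]
  have ht (t : Fin (m + n)) : (((p t.succ).1 : ℤ) - (q t.succ).1).natAbs
      = #{k : Fin m | ¬((k : ℕ) < (p t.succ).1 ↔ (k : ℕ) < (q t.succ).1)} :=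
    natAbs_sub_eq_card_filter_not_iff (hp.fst_le _) (hq.fst_le _)
  have hswap (k : Fin m) (t : Fin (m + n)) : ((t : ℕ) < e k ↔ (t : ℕ) < e' k)
      ↔ ((k : ℕ) < (p t.succ).1 ↔ (k : ℕ) < (q t.succ).1) := by
    rw [hp.fst_succ_eq_card, hq.fst_succ_eq_card, ← orderEmbOfFin_le_iff,
      ← orderEmbOfFin_le_iff, ← Fin.lt_def, ← Fin.lt_def, ← not_lt, ← not_lt, not_iff_not]
  simp_rw [hk, ht, hswap]
  exact sum_card_bipartiteAbove_eq_sum_card_bipartiteBelow _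

end IsStaircase

theorem staircase_dual_adjacency_general (m n : ℕ) (p q : Fin (m + n + 1) → ℕ × ℕ)
    (hp : IsStaircase m n p) (hq : IsStaircase m n q) :
    ((Finset.univ.image p) ∩ (Finset.univ.image q)).card = m + n ↔
      ∑ k : Fin m, ((sVec m n p k : ℤ) - (sVec m n q k : ℤ)).natAbs = 1 := by
  have hsplit : #{t | p t = q t} + #{t | p t ≠ q t} = m + n + 1 := by
    simpa using card_filter_add_card_filter_not (s := univ) (fun t => p t = q t)
  have hne : #{t | p t ≠ q t} = #{t | (p t).1 ≠ (q t).1} := by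
    simp only [ne_eq, hp.eq_iff_fst_eq hq]
  have harea : ∑ k : Fin m, ((sVec m n p k : ℤ) - sVec m n q k).natAbs
      = ∑ t, (((p t).1 : ℤ) - (q t).1).natAbs := by
    simp [hp.sum_natAbs_sVec_sub hq, Fin.sum_univ_succ, hp.1, hq.1]
  rw [hp.card_image_inter_image hq, harea, ← card_filter_ne_eq_one_iff_sum_natAbs_sub_eq_one
    (by simp [hp.1, hq.1]) hp.fst_succ_eq_or hq.fst_succ_eq_or, ← hne]
  omega

/-- Two distinct staircases from `(0,0)` to `(m,n)` visit exactly `m+n` common lattice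
points if and only if their associated vectors `s(F_P)`, `s(F_Q)` differ in exactly one
coordinate, and there by exactly one, i.e. `∑_k |s(F_P)_k − s(F_Q)_k| = 1`. -/
theorem staircase_dual_adjacency (m n : ℕ) (p q : Fin (m + n + 1) → ℕ × ℕ)
    (hp : IsStaircase m n p) (hq : IsStaircase m n q) (hpq : p ≠ q) :
    ((Finset.univ.image p) ∩ (Finset.univ.image q)).card = m + n ↔
      ∑ k : Fin m, ((sVec m n p k : ℤ) - (sVec m n q k : ℤ)).natAbs = 1 :=
  staircase_dual_adjacency_general m n p q hp hq
end

section
/- Let m, n be natural numbers, let a : {0,…,m} → ℝ and b : {0,…,n} → ℝ, and let c : {0,…,m} × {0,…,n} → ℝ satisfy c(i,j) > 0 for all i, j. If for every k ∈ {0,…,m+n} one has Σ_{i+j=k} c(i,j)·a(i)·b(j) = 0 (the sum over all pairs (i,j) with 0 ≤ i ≤ m, 0 ≤ j ≤ n, i + j = k), then either a(i) = 0 for all i, or b(j) = 0 for all j. -/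
/-- If all weighted convolutions `∑_{i+j=k} c(i,j)·a(i)·b(j)` (for `0 ≤ k ≤ m+n`) of two
finite real sequences vanish, where all weights `c(i,j)` are strictly positive, then one
of the two sequences vanishes identically. -/
theorem weighted_convolution_eq_zero (m n : ℕ) (a : Fin (m + 1) → ℝ) (b : Fin (n + 1) → ℝ)
    (c : Fin (m + 1) → Fin (n + 1) → ℝ) (hc : ∀ i j, 0 < c i j)
    (h : ∀ k : ℕ, k ≤ m + n →
      ∑ i : Fin (m + 1), ∑ j : Fin (n + 1),
        (if (i : ℕ) + (j : ℕ) = k then c i j * a i * b j else 0) = 0) :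
    (∀ i, a i = 0) ∨ (∀ j, b j = 0) := by
  by_contra hcon
  push_neg at hcon
  obtain ⟨⟨i1, ha1⟩, ⟨j1, hb1⟩⟩ := hcon
  have hPa : ∃ k : ℕ, ∃ hk : k < m + 1, a ⟨k, hk⟩ ≠ 0 := ⟨i1, i1.isLt, by simpa using ha1⟩
  have hPb : ∃ k : ℕ, ∃ hk : k < n + 1, b ⟨k, hk⟩ ≠ 0 := ⟨j1, j1.isLt, by simpa using hb1⟩
  classical
  set i0 := Nat.find hPa with hi0
  set j0 := Nat.find hPb with hj0
  obtain ⟨hi0lt, ha0⟩ := Nat.find_spec hPa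
  obtain ⟨hj0lt, hb0⟩ := Nat.find_spec hPb
  have hamin : ∀ i : Fin (m + 1), (i : ℕ) < i0 → a i = 0 := by
    intro i hlt
    have := Nat.find_min hPa hlt
    push_neg at this
    simpa using this i.isLt
  have hbmin : ∀ j : Fin (n + 1), (j : ℕ) < j0 → b j = 0 := by
    intro j hlt
    have := Nat.find_min hPb hlt
    push_neg at this
    simpa using this j.isLt
  set I0 : Fin (m + 1) := ⟨i0, hi0lt⟩
  set J0 : Fin (n + 1) := ⟨j0, hj0lt⟩
  have hk : i0 + j0 ≤ m + n := by omega
  have hsum := h (i0 + j0) hk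
  have key : ∑ i : Fin (m + 1), ∑ j : Fin (n + 1),
      (if (i : ℕ) + (j : ℕ) = i0 + j0 then c i j * a i * b j else 0)
      = c I0 J0 * a I0 * b J0 := by
    rw [Finset.sum_eq_single I0]
    · rw [Finset.sum_eq_single J0]
      · simp [I0, J0]
      · intro j _ hj
        rw [if_neg]
        intro hij
        refine hj (Fin.ext ?_)
        simp only [I0, J0, Fin.val_mk] at hij ⊢
        omega
      · simp
    · intro i _ hi
      apply Finset.sum_eq_zero
      intro j _
      rcases lt_trichotomy (i : ℕ) i0 with hlt | heq | hgt
      · rw [hamin i hlt]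
        simp
      · exact absurd (Fin.ext heq) hi
      · split_ifs with hij
        · rw [hbmin j (by omega)]
          ring
        · rfl
    · simp
  rw [key] at hsum
  exact mul_ne_zero (mul_ne_zero (hc I0 J0).ne' ha0) hb0 hsum
end

section
/- Let m, n, p, q be natural numbers, let F_0, …, F_m be real polynomials in p variables and G_0, …, G_n be real polynomials in q variables, and let c : {0,…,m} × {0,…,n} → ℝ satisfy c(i,j) > 0 for all i, j. For k ∈ {0,…,m+n} define the polynomial H_k in p + q variables by H_k(t,u) = Σ_{i+j=k} c(i,j)·F_i(t)·G_j(u). Then the common real zero set of H_0, …, H_{m+n} in ℝ^p × ℝ^q equals (Z × ℝ^q) ∪ (ℝ^p × Z'), where Z = {t ∈ ℝ^p : F_i(t) = 0 for all i ∈ {0,…,m}} and Z' = {u ∈ ℝ^q : G_j(u) = 0 for all j ∈ {0,…,n}}. -/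
/-- Let `F_0,…,F_m` be real polynomials in `p` variables, `G_0,…,G_n` real polynomials
in `q` variables, and `c(i,j) > 0`. Define `H_k(t,u) = ∑_{i+j=k} c(i,j)·F_i(t)·G_j(u)`,
a polynomial in `p + q` variables. Then the common real zero set of `H_0,…,H_{m+n}` in
`ℝ^p × ℝ^q` equals `(Z × ℝ^q) ∪ (ℝ^p × Z')`, where `Z` is the common zero set of the
`F_i` and `Z'` that of the `G_j`. -/
theorem zero_set_of_convolution_system (m n p q : ℕ)
    (F : Fin (m + 1) → MvPolynomial (Fin p) ℝ)
    (G : Fin (n + 1) → MvPolynomial (Fin q) ℝ)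
    (c : Fin (m + 1) → Fin (n + 1) → ℝ) (hc : ∀ i j, 0 < c i j)
    (H : Fin (m + n + 1) → MvPolynomial (Fin p ⊕ Fin q) ℝ)
    (hH : ∀ k : Fin (m + n + 1), H k =
      ∑ i : Fin (m + 1), ∑ j : Fin (n + 1),
        if (i : ℕ) + (j : ℕ) = (k : ℕ) then
          MvPolynomial.C (c i j) * MvPolynomial.rename Sum.inl (F i) *
            MvPolynomial.rename Sum.inr (G j)
        else 0) :
    {x : (Fin p → ℝ) × (Fin q → ℝ) |
        ∀ k, MvPolynomial.eval (Sum.elim x.1 x.2) (H k) = 0} =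
      ({t : Fin p → ℝ | ∀ i, MvPolynomial.eval t (F i) = 0} ×ˢ
          (Set.univ : Set (Fin q → ℝ))) ∪
        ((Set.univ : Set (Fin p → ℝ)) ×ˢ
          {u : Fin q → ℝ | ∀ j, MvPolynomial.eval u (G j) = 0}) := by
  ext ⟨t, u⟩
  simp only [Set.mem_setOf_eq, Set.mem_union, Set.mem_prod, Set.mem_univ, and_true, true_and]
  have heval : ∀ k : Fin (m + n + 1), MvPolynomial.eval (Sum.elim t u) (H k) =
      ∑ i : Fin (m + 1), ∑ j : Fin (n + 1),
        if (i : ℕ) + (j : ℕ) = (k : ℕ) then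
          c i j * MvPolynomial.eval t (F i) * MvPolynomial.eval u (G j) else 0 := by
    intro k
    rw [hH k]
    simp only [map_sum]
    refine Finset.sum_congr rfl fun i _ => Finset.sum_congr rfl fun j _ => ?_
    split_ifs with h
    · simp [MvPolynomial.eval_rename, Sum.elim_comp_inl, Sum.elim_comp_inr]
    · simp
  constructor
  · intro h
    by_contra hcon
    push_neg at hcon
    obtain ⟨⟨i1, hi1⟩, ⟨j1, hj1⟩⟩ := hcon
    set S : Finset (Fin (m + 1)) := Finset.univ.filter
      (fun i => MvPolynomial.eval t (F i) ≠ 0) with hSdef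
    set T : Finset (Fin (n + 1)) := Finset.univ.filter
      (fun j => MvPolynomial.eval u (G j) ≠ 0) with hTdef
    have hS : S.Nonempty := ⟨i1, by simp [hSdef, hi1]⟩
    have hT : T.Nonempty := ⟨j1, by simp [hTdef, hj1]⟩
    set i0 := S.min' hS with hi0def
    set j0 := T.min' hT with hj0def
    have hi0 : MvPolynomial.eval t (F i0) ≠ 0 := by
      have := S.min'_mem hS; simpa [hSdef] using this
    have hj0 : MvPolynomial.eval u (G j0) ≠ 0 := by
      have := T.min'_mem hT; simpa [hTdef] using this
    have hi0min : ∀ i : Fin (m + 1), (i : ℕ) < (i0 : ℕ) →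
        MvPolynomial.eval t (F i) = 0 := by
      intro i hi
      by_contra hne
      have h1 : i0 ≤ i := S.min'_le i (by simp [hSdef, hne])
      rw [Fin.le_def] at h1; omega
    have hj0min : ∀ j : Fin (n + 1), (j : ℕ) < (j0 : ℕ) →
        MvPolynomial.eval u (G j) = 0 := by
      intro j hj
      by_contra hne
      have h1 : j0 ≤ j := T.min'_le j (by simp [hTdef, hne])
      rw [Fin.le_def] at h1; omega
    have hk := h ⟨(i0 : ℕ) + (j0 : ℕ), by omega⟩
    rw [heval] at hk
    rw [← Finset.sum_product'] at hk
    rw [Finset.sum_eq_single_of_mem (i0, j0) (Finset.mem_product.mpr ⟨Finset.mem_univ _,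
        Finset.mem_univ _⟩)] at hk
    · simp only [if_pos rfl] at hk
      exact hi0 (by
        rcases mul_eq_zero.mp hk with h' | h'
        · rcases mul_eq_zero.mp h' with h'' | h''
          · exact absurd h'' (ne_of_gt (hc i0 j0))
          · exact h''
        · exact absurd h' hj0)
    · rintro ⟨i, j⟩ - hne
      by_cases hij : (i : ℕ) + (j : ℕ) = (i0 : ℕ) + (j0 : ℕ)
      · rw [if_pos hij]
        rcases lt_trichotomy (i : ℕ) (i0 : ℕ) with hlt | heq | hgt
        · rw [hi0min i hlt]; ring
        · exfalso
          apply hne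
          have hi' : i = i0 := Fin.ext heq
          have hj' : j = j0 := Fin.ext (by omega)
          rw [hi', hj']
        · have : (j : ℕ) < (j0 : ℕ) := by omega
          rw [hj0min j this]; ring
      · rw [if_neg hij]
  · rintro (hF | hG) k <;> rw [heval] <;>
      refine Finset.sum_eq_zero fun i _ => Finset.sum_eq_zero fun j _ => ?_ <;>
      split_ifs with h
    · rw [hF i]; ring
    · rfl
    · rw [hG j]; ring
    · rfl
end

section
/- Let m, n be natural numbers and let p_0, p_1, …, p_{m+n} be a staircase from (0,0) to (m,n), with p_t = (i_t, j_t). Then the m+n+1 points w(p_t) = (e_{i_t}, e_{j_t}) ∈ ℝ^{m+n}, for t = 0,…,m+n, are affinely independent. -/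
/-- `stdVert d k` is the vertex `e_k` of the standard simplex `Δ_d ⊂ ℝ^d`: the `k`-th
standard unit vector for `1 ≤ k ≤ d`, and the origin for `k = 0`. -/
noncomputable def stdVert (d k : ℕ) : Fin d → ℝ := fun a => if (a : ℕ) + 1 = k then 1 else 0

/-- The vertex `w(i,j) = (e_i, e_j) ∈ ℝ^{m+n}` of the product `Δ_m × Δ_n`. -/
noncomputable def wPt (m n : ℕ) (v : ℕ × ℕ) : Fin (m + n) → ℝ :=
  Fin.append (stdVert m v.1) (stdVert n v.2)

/-- Summing the coordinates of `stdVert d i` over positions `a` with `k ≤ a+1` detects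
whether `k ≤ i`, provided `1 ≤ k` and `i ≤ d`. -/
lemma stdVert_threshold_sum (d i k : ℕ) (hi : i ≤ d) (hk : 1 ≤ k) :
    ∑ a : Fin d, (if k ≤ (a : ℕ) + 1 then stdVert d i a else 0) = if k ≤ i then 1 else 0 := by
  by_cases h : k ≤ i
  · have hi1 : 1 ≤ i := hk.trans h
    rw [if_pos h, Finset.sum_eq_single (⟨i - 1, by omega⟩ : Fin d)]
    · simp only [stdVert]
      rw [if_pos (by omega), if_pos (by omega)]
    · intro a _ ha
      have hne : (a : ℕ) + 1 ≠ i := by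
        intro hc
        apply ha
        apply Fin.ext
        simp only
        omega
      simp only [stdVert]
      rw [if_neg hne]
      simp
    · intro hc
      exact absurd (Finset.mem_univ _) hc
  · rw [if_neg h]
    apply Finset.sum_eq_zero
    intro a _
    simp only [stdVert]
    split_ifs with h1 h2
    · omega
    · rfl
    · rfl

/-- For any staircase `p_0,…,p_{m+n}` from `(0,0)` to `(m,n)`, the `m+n+1` points
`w(p_t) = (e_{i_t}, e_{j_t}) ∈ ℝ^{m+n}` are affinely independent. -/
theorem staircase_affineIndependent (m n : ℕ) (p : Fin (m + n + 1) → ℕ × ℕ)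
    (hp : IsStaircase m n p) :
    AffineIndependent ℝ (fun t : Fin (m + n + 1) => wPt m n (p t)) := by
  obtain ⟨h0, hlast, hstep⟩ := hp
  -- monotonicity of the two coordinates
  have hmi : Monotone fun t : Fin (m + n + 1) => (p t).1 := by
    rw [Fin.monotone_iff_le_succ]
    intro t
    rcases hstep t with h | h <;> rw [h] <;> simp
  have hmj : Monotone fun t : Fin (m + n + 1) => (p t).2 := by
    rw [Fin.monotone_iff_le_succ]
    intro t
    rcases hstep t with h | h <;> rw [h] <;> simp
  have hbm : ∀ t, (p t).1 ≤ m := by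
    intro t
    have := hmi (Fin.le_last t)
    simpa [hlast] using this
  have hbn : ∀ t, (p t).2 ≤ n := by
    intro t
    have := hmj (Fin.le_last t)
    simpa [hlast] using this
  rw [affineIndependent_iff_of_fintype]
  intro w hw hws
  rw [Finset.weightedVSub_eq_linear_combination _ hw] at hws
  -- coordinatewise equations
  have hcoord : ∀ c : Fin (m + n), ∑ t, w t * wPt m n (p t) c = 0 := by
    intro c
    have := congrFun hws c
    simpa [Finset.sum_apply] using this
  -- the tail sums all vanish
  have hS : ∀ k : ℕ, ∑ t : Fin (m + n + 1), (if k ≤ (t : ℕ) then w t else 0) = 0 := by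
    intro k
    match k with
    | 0 => simpa using hw
    | (k' + 1) =>
      by_cases hk : k' + 1 ≤ m + n
      swap
      · apply Finset.sum_eq_zero
        intro t _
        rw [if_neg (by omega)]
      · set τ : Fin (m + n) := ⟨k', hk⟩ with hτ
        -- In either case of the step, we produce the tail-sum identity.
        rcases hstep τ with hst | hst
        · -- horizontal step: use first-block coordinates
          set K := (p τ.succ).1 with hK
          have hKc : K = (p τ.castSucc).1 + 1 := by rw [hK, hst]; rfl
          have hK1 : 1 ≤ K := by omega
          have key : ∀ t : Fin (m + n + 1), (K ≤ (p t).1 ↔ k' + 1 ≤ (t : ℕ)) := by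
            intro t
            constructor
            · intro h
              by_contra hc
              have hle : t ≤ τ.castSucc := by
                rw [Fin.le_def]
                simp [hτ]
                omega
              have := hmi hle
              simp only at this
              omega
            · intro h
              have hle : τ.succ ≤ t := by
                rw [Fin.le_def]
                simpa [hτ] using h
              have := hmi hle
              simp only at this
              omega
          have h1 : ∑ a : Fin m, (if K ≤ (a : ℕ) + 1 then
              (∑ t, w t * wPt m n (p t) (Fin.castAdd n a)) else 0) = 0 := by
            apply Finset.sum_eq_zero
            intro a _
            rw [hcoord (Fin.castAdd n a)]
            simp
          calc ∑ t : Fin (m + n + 1), (if k' + 1 ≤ (t : ℕ) then w t else 0)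
              = ∑ t : Fin (m + n + 1), w t *
                  (if K ≤ (p t).1 then 1 else 0) := by
                apply Finset.sum_congr rfl
                intro t _
                by_cases h : k' + 1 ≤ (t : ℕ)
                · rw [if_pos h, if_pos ((key t).2 h), mul_one]
                · rw [if_neg h, if_neg (fun hc => h ((key t).1 hc)), mul_zero]
            _ = ∑ t : Fin (m + n + 1), ∑ a : Fin m,
                  (if K ≤ (a : ℕ) + 1 then w t * wPt m n (p t) (Fin.castAdd n a) else 0) := by
                apply Finset.sum_congr rfl
                intro t _
                rw [← stdVert_threshold_sum m (p t).1 K (hbm t) hK1, Finset.mul_sum]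
                apply Finset.sum_congr rfl
                intro a _
                simp only [wPt, Fin.append_left]
                split_ifs <;> ring
            _ = 0 := by
                rw [Finset.sum_comm]
                exact (Finset.sum_congr rfl fun a _ => by
                  by_cases h : K ≤ (a : ℕ) + 1 <;> simp [h]).trans h1
        · -- vertical step: use second-block coordinates
          set K := (p τ.succ).2 with hK
          have hKc : K = (p τ.castSucc).2 + 1 := by rw [hK, hst]; rfl
          have hK1 : 1 ≤ K := by omega
          have key : ∀ t : Fin (m + n + 1), (K ≤ (p t).2 ↔ k' + 1 ≤ (t : ℕ)) := by
            intro t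
            constructor
            · intro h
              by_contra hc
              have hle : t ≤ τ.castSucc := by
                rw [Fin.le_def]
                simp [hτ]
                omega
              have := hmj hle
              simp only at this
              omega
            · intro h
              have hle : τ.succ ≤ t := by
                rw [Fin.le_def]
                simpa [hτ] using h
              have := hmj hle
              simp only at this
              omega
          have h1 : ∑ b : Fin n, (if K ≤ (b : ℕ) + 1 then
              (∑ t, w t * wPt m n (p t) (Fin.natAdd m b)) else 0) = 0 := by
            apply Finset.sum_eq_zero
            intro b _
            rw [hcoord (Fin.natAdd m b)]
            simp
          calc ∑ t : Fin (m + n + 1), (if k' + 1 ≤ (t : ℕ) then w t else 0)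
              = ∑ t : Fin (m + n + 1), w t *
                  (if K ≤ (p t).2 then 1 else 0) := by
                apply Finset.sum_congr rfl
                intro t _
                by_cases h : k' + 1 ≤ (t : ℕ)
                · rw [if_pos h, if_pos ((key t).2 h), mul_one]
                · rw [if_neg h, if_neg (fun hc => h ((key t).1 hc)), mul_zero]
            _ = ∑ t : Fin (m + n + 1), ∑ b : Fin n,
                  (if K ≤ (b : ℕ) + 1 then w t * wPt m n (p t) (Fin.natAdd m b) else 0) := by
                apply Finset.sum_congr rfl
                intro t _
                rw [← stdVert_threshold_sum n (p t).2 K (hbn t) hK1, Finset.mul_sum]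
                apply Finset.sum_congr rfl
                intro b _
                simp only [wPt, Fin.append_right]
                split_ifs <;> ring
            _ = 0 := by
                rw [Finset.sum_comm]
                exact (Finset.sum_congr rfl fun b _ => by
                  by_cases h : K ≤ (b : ℕ) + 1 <;> simp [h]).trans h1
  -- conclude: each weight is a difference of consecutive tail sums
  intro t
  have h1 := hS (t : ℕ)
  have h2 := hS ((t : ℕ) + 1)
  have hwt : ∑ s : Fin (m + n + 1), (if (s : ℕ) = (t : ℕ) then w s else 0) = w t := by
    simp [Fin.val_eq_val, Finset.sum_ite_eq']
  have h3 : ∑ s : Fin (m + n + 1),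
      ((if (t : ℕ) ≤ (s : ℕ) then w s else 0) - (if (t : ℕ) + 1 ≤ (s : ℕ) then w s else 0)) = 0 := by
    rw [Finset.sum_sub_distrib, h1, h2, sub_zero]
  rw [← hwt]
  refine Eq.trans ?_ h3
  apply Finset.sum_congr rfl
  intro s _
  split_ifs with ha hb hc <;> first | omega | simp
end

section
/- Let m, n be natural numbers. The product of standard simplices Δ_m × Δ_n ⊂ ℝ^{m+n} is the union of the staircase simplices: for every point (x,y) with x ∈ Δ_m and y ∈ Δ_n there exists a staircase p_0,…,p_{m+n} from (0,0) to (m,n) such that (x,y) lies in the convex hull of {w(p_t) : 0 ≤ t ≤ m+n}; conversely, each such convex hull is contained in Δ_m × Δ_n. -/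
/-!
Write `x ∈ Δ_m` and `y ∈ Δ_n` in barycentric coordinates `a = (1 - ∑ x, x)` and
`b = (1 - ∑ y, y)`. The north-west corner rule couples these two probability vectors by weights
supported on a staircase: compare the last masses `a_m` and `b_n`, put the smaller one on the
vertex `(m,n)` and recurse on what is left. The weights of this coupling are the coefficients of
`(x,y)` as a convex combination of the `w(p_t)`. Conversely, `Δ_m × Δ_n` is convex and contains
every `w(i,j)`.
-/

open Finset Function

def cornerSimplex (ι : Type*) [Fintype ι] : Set (ι → ℝ) :=
  {x | (∀ i, 0 ≤ x i) ∧ ∑ i, x i ≤ 1}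

theorem convex_cornerSimplex (ι : Type*) [Fintype ι] : Convex ℝ (cornerSimplex ι) := by
  refine fun f hf g hg a b ha hb hab => ⟨fun i => ?_, ?_⟩
  · apply_rules [add_nonneg, mul_nonneg, hf.1, hg.1]
  · simp_rw [Pi.add_apply, Pi.smul_apply, smul_eq_mul]
    rw [sum_add_distrib, ← mul_sum, ← mul_sum]
    nlinarith [hf.2, hg.2]

theorem stdVert_mem_cornerSimplex (d k : ℕ) : stdVert d k ∈ cornerSimplex (Fin d) := by
  refine ⟨fun a => by unfold stdVert; split <;> norm_num, ?_⟩
  simp only [stdVert, sum_boole]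
  exact_mod_cast card_le_one.2 fun a ha b hb => Fin.ext (by simp at ha hb; omega)

theorem exists_append_of_mem_convexHull_wPt {τ : Type*} (m n : ℕ) (p : τ → ℕ × ℕ)
    {z : Fin (m + n) → ℝ} (hz : z ∈ convexHull ℝ (Set.range fun t => wPt m n (p t))) :
    ∃ x ∈ cornerSimplex (Fin m), ∃ y ∈ cornerSimplex (Fin n), z = Fin.append x y := by
  let left := LinearMap.funLeft ℝ ℝ (Fin.castAdd n : Fin m → Fin (m + n))
  let right := LinearMap.funLeft ℝ ℝ (Fin.natAdd m : Fin n → Fin (m + n))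
  have hsub : convexHull ℝ (Set.range fun t => wPt m n (p t)) ⊆
      left ⁻¹' cornerSimplex (Fin m) ∩ right ⁻¹' cornerSimplex (Fin n) := by
    refine convexHull_min (Set.range_subset_iff.2 fun t => ⟨?_, ?_⟩)
      (((convex_cornerSimplex _).linear_preimage _).inter
        ((convex_cornerSimplex _).linear_preimage _))
    · rw [Set.mem_preimage]
      convert stdVert_mem_cornerSimplex m (p t).1 using 1
      ext i
      exact Fin.append_left _ _ i
    · rw [Set.mem_preimage]
      convert stdVert_mem_cornerSimplex n (p t).2 using 1
      ext j
      exact Fin.append_right _ _ j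
  obtain ⟨hx, hy⟩ := hsub hz
  exact ⟨_, hx, _, hy, Fin.append_castAdd_natAdd.symm⟩

/-- Paths (and below, weights) are indexed by `ℕ` rather than `Fin (m + n + 1)`, so that the
induction can extend them with `update`; only the values at `t ≤ m + n` matter. -/
def IsStaircasePath (m n : ℕ) (P : ℕ → ℕ × ℕ) : Prop :=
  P 0 = (0, 0) ∧ P (m + n) = (m, n) ∧
    ∀ t < m + n, P (t + 1) = P t + (1, 0) ∨ P (t + 1) = P t + (0, 1)

namespace IsStaircasePath

variable {m n : ℕ} {P : ℕ → ℕ × ℕ}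

theorem isStaircase (hP : IsStaircasePath m n P) : IsStaircase m n fun t => P t :=
  ⟨hP.1, hP.2.1, fun t => by simpa using hP.2.2 t t.isLt⟩

theorem swap (hP : IsStaircasePath m n P) : IsStaircasePath n m (Prod.swap ∘ P) := by
  refine ⟨by simp [hP.1], by simp [add_comm n m, hP.2.1], fun t ht => ?_⟩
  rcases hP.2.2 t (by omega) with h | h <;> simp [h]

theorem update_up (hP : IsStaircasePath m n P) :
    IsStaircasePath m (n + 1) (update P (m + n + 1) (m, n + 1)) := by
  refine ⟨by simp [hP.1], by simp [← add_assoc], fun t ht => ?_⟩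
  rcases Nat.lt_or_ge t (m + n) with ht' | ht'
  · rw [update_of_ne (by omega), update_of_ne (by omega)]
    exact hP.2.2 t ht'
  · obtain rfl : t = m + n := by omega
    right
    simp [hP.2.1]

end IsStaircasePath

theorem sum_range_succ_update₂ {α β M : Type*} [AddCommMonoid M] (F : α → β → M)
    (P : ℕ → α) (L : ℕ → β) (N : ℕ) (p : α) (l : β) :
    ∑ t ∈ range (N + 1 + 1), F (update P (N + 1) p t) (update L (N + 1) l t) =
      ∑ t ∈ range (N + 1), F (P t) (L t) + F p l := by
  rw [sum_range_succ, update_self, update_self]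
  congr 1
  refine sum_congr rfl fun t ht => ?_
  have : t ≠ N + 1 := by simp at ht; omega
  rw [update_of_ne this, update_of_ne this]

theorem update_sub_add_single {ι G : Type*} [DecidableEq ι] [AddGroup G] (f : ι → G) (i : ι)
    (c : G) : update f i (f i - c) + Pi.single i c = f := by
  ext j
  rcases eq_or_ne j i with rfl | h <;> simp [*]

theorem sum_update_sub {ι G : Type*} [DecidableEq ι] [AddCommGroup G] {s : Finset ι} {i : ι}
    (hi : i ∈ s) (f : ι → G) (c : G) :
    ∑ j ∈ s, update f i (f i - c) j = ∑ j ∈ s, f j - c := by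
  rw [sum_update_of_mem hi, sum_eq_add_sum_sdiff_singleton_of_mem hi]
  abel

theorem single_zero_self_of_forall_pos {M : Type*} [AddCommMonoid M] {f : ℕ → M}
    (hf : ∀ i, 0 < i → f i = 0) : Pi.single 0 (f 0) = f := by
  ext (_ | i)
  · simp
  · simp [hf (i + 1) i.succ_pos]

structure IsStaircaseCoupling (m n : ℕ) (a b : ℕ → ℝ) (P : ℕ → ℕ × ℕ) (L : ℕ → ℝ) : Prop where
  path : IsStaircasePath m n P
  nonneg : 0 ≤ L
  sum_eq : ∑ t ∈ range (m + n + 1), L t = ∑ i ∈ range (m + 1), a i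
  fst : ∑ t ∈ range (m + n + 1), Pi.single (P t).1 (L t) = a
  snd : ∑ t ∈ range (m + n + 1), Pi.single (P t).2 (L t) = b

namespace IsStaircaseCoupling

variable {m n : ℕ} {a b : ℕ → ℝ} {P : ℕ → ℕ × ℕ} {L : ℕ → ℝ}

theorem swap (h : IsStaircaseCoupling m n a b P L)
    (hab : ∑ i ∈ range (m + 1), a i = ∑ j ∈ range (n + 1), b j) :
    IsStaircaseCoupling n m b a (Prod.swap ∘ P) L where
  path := h.path.swap
  nonneg := h.nonneg
  sum_eq := by rw [add_comm n m, h.sum_eq, hab]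
  fst := by simpa [add_comm n m] using h.snd
  snd := by simpa [add_comm n m] using h.fst

theorem update_up
    (h : IsStaircaseCoupling m n (update a m (a m - b (n + 1))) (update b (n + 1) 0) P L)
    (hb : 0 ≤ b (n + 1)) :
    IsStaircaseCoupling m (n + 1) a b (update P (m + n + 1) (m, n + 1))
      (update L (m + n + 1) (b (n + 1))) where
  path := h.path.update_up
  nonneg t := by
    rcases eq_or_ne t (m + n + 1) with rfl | ht
    · simpa using hb
    · simpa [ht] using h.nonneg t
  sum_eq := by
    rw [← add_assoc, sum_range_succ_update₂ (fun (_ : ℕ × ℕ) (l : ℝ) => l) P L _ (m, n + 1),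
      h.sum_eq, sum_update_sub (by simp)]
    abel
  fst := by
    rw [← add_assoc,
      sum_range_succ_update₂ (fun (p : ℕ × ℕ) (l : ℝ) => (Pi.single p.1 l : ℕ → ℝ)), h.fst]
    exact update_sub_add_single a m _
  snd := by
    rw [← add_assoc,
      sum_range_succ_update₂ (fun (p : ℕ × ℕ) (l : ℝ) => (Pi.single p.2 l : ℕ → ℝ)), h.snd]
    simpa using update_sub_add_single b (n + 1) (b (n + 1))

end IsStaircaseCoupling

theorem exists_isStaircaseCoupling {m n : ℕ} {a b : ℕ → ℝ} (ha : 0 ≤ a) (hb : 0 ≤ b)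
    (ha_supp : ∀ i, m < i → a i = 0) (hb_supp : ∀ j, n < j → b j = 0)
    (hab : ∑ i ∈ range (m + 1), a i = ∑ j ∈ range (n + 1), b j) :
    ∃ P L, IsStaircaseCoupling m n a b P L := by
  obtain ⟨N, hN⟩ : ∃ N, m + n = N := ⟨_, rfl⟩
  induction N generalizing m n a b with
  | zero =>
    obtain ⟨rfl, rfl⟩ : m = 0 ∧ n = 0 := by omega
    have hab : a 0 = b 0 := by simpa using hab
    refine ⟨fun _ => (0, 0), fun _ => a 0, ⟨⟨rfl, rfl, by simp⟩, fun _ => ha 0, by simp, ?_, ?_⟩⟩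
    · simpa using single_zero_self_of_forall_pos ha_supp
    · simpa [hab] using single_zero_self_of_forall_pos hb_supp
  | succ N ih =>
    have ha_le : a m ≤ ∑ i ∈ range (m + 1), a i := single_le_sum (fun i _ => ha i) (by simp)
    have hb_le : b n ≤ ∑ j ∈ range (n + 1), b j := single_le_sum (fun j _ => hb j) (by simp)
    -- The last step can go up or right, and by `IsStaircaseCoupling.swap` we may take it up.
    wlog hle : 0 < n ∧ b n ≤ a m generalizing m n a b with H
    · have hle' : 0 < m ∧ a m ≤ b n := by
        rcases Nat.eq_zero_or_pos n with rfl | hn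
        · exact ⟨by omega, ha_le.trans (by simpa using hab.le)⟩
        · have hlt : a m < b n := not_le.1 fun h => hle ⟨hn, h⟩
          refine ⟨Nat.pos_of_ne_zero ?_, hlt.le⟩
          rintro rfl
          exact hlt.not_ge (hb_le.trans (by simpa using hab.ge))
      obtain ⟨P, L, h⟩ := H hb ha hb_supp ha_supp hab.symm (by omega) hb_le ha_le hle'
      exact ⟨_, _, h.swap hab.symm⟩
    obtain ⟨hn, hle⟩ := hle
    obtain ⟨n, rfl⟩ : ∃ k, n = k + 1 := ⟨n - 1, by omega⟩
    have hsum : ∑ i ∈ range (m + 1), update a m (a m - b (n + 1)) i =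
        ∑ j ∈ range (n + 1), update b (n + 1) 0 j := by
      rw [sum_update_sub (by simp), sum_update_of_notMem (by simp), hab, sum_range_succ]
      abel
    obtain ⟨P, L, h⟩ := ih (a := update a m (a m - b (n + 1))) (b := update b (n + 1) 0)
      (fun i => by rw [update_apply]; split_ifs; exacts [sub_nonneg.2 hle, ha i])
      (fun j => by rw [update_apply]; split_ifs; exacts [le_rfl, hb j])
      (fun i hi => by rw [update_of_ne (by omega), ha_supp i hi])
      (fun j hj => by rw [update_apply]; split_ifs; exacts [rfl, hb_supp j (by omega)])
      hsum (by omega)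
    exact ⟨_, _, h.update_up (hb _)⟩

noncomputable def baryCoords {d : ℕ} (x : Fin d → ℝ) (i : ℕ) : ℝ :=
  if h : i < d + 1 then (Fin.cons (1 - ∑ k, x k) x : Fin (d + 1) → ℝ) ⟨i, h⟩ else 0

section baryCoords

variable {d : ℕ} (x : Fin d → ℝ)

theorem baryCoords_coe (i : Fin (d + 1)) :
    baryCoords x i = (Fin.cons (1 - ∑ k, x k) x : Fin (d + 1) → ℝ) i :=
  dif_pos i.isLt

theorem baryCoords_succ (k : Fin d) : baryCoords x (k + 1) = x k := by
  simpa using baryCoords_coe x k.succ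

theorem baryCoords_of_lt {i : ℕ} (hi : d < i) : baryCoords x i = 0 :=
  dif_neg (by omega)

theorem sum_baryCoords : ∑ i ∈ range (d + 1), baryCoords x i = 1 := by
  simp_rw [← Fin.sum_univ_eq_sum_range, baryCoords_coe, Fin.sum_cons]
  ring

theorem baryCoords_nonneg {x : Fin d → ℝ} (hx : x ∈ cornerSimplex (Fin d)) : 0 ≤ baryCoords x := by
  intro i
  unfold baryCoords
  split_ifs with h
  · induction (⟨i, h⟩ : Fin (d + 1)) using Fin.cases with
    | zero => simpa using hx.2
    | succ k => simpa using hx.1 k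
  · exact le_rfl

end baryCoords

theorem sum_smul_wPt {τ : Type*} (m n : ℕ) (s : Finset τ) (L : τ → ℝ) (p : τ → ℕ × ℕ) :
    ∑ t ∈ s, L t • wPt m n (p t) =
      Fin.append (∑ t ∈ s, L t • stdVert m (p t).1) (∑ t ∈ s, L t • stdVert n (p t).2) := by
  ext i
  refine Fin.addCases (fun a => ?_) (fun b => ?_) i <;> simp [wPt, Finset.sum_apply]

theorem sum_smul_stdVert_apply {τ : Type*} (d : ℕ) (s : Finset τ) (L : τ → ℝ) (g : τ → ℕ)
    (a : Fin d) :
    (∑ t ∈ s, L t • stdVert d (g t)) a = (∑ t ∈ s, Pi.single (g t) (L t) : ℕ → ℝ) (a + 1) := by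
  simp [stdVert, Finset.sum_apply, Pi.single_apply]

theorem IsStaircaseCoupling.append_mem_convexHull {m n : ℕ} {x : Fin m → ℝ} {y : Fin n → ℝ}
    {P : ℕ → ℕ × ℕ} {L : ℕ → ℝ} (h : IsStaircaseCoupling m n (baryCoords x) (baryCoords y) P L) :
    Fin.append x y ∈ convexHull ℝ (Set.range fun t : Fin (m + n + 1) => wPt m n (P t)) := by
  refine mem_convexHull_of_exists_fintype (fun t : Fin (m + n + 1) => L t)
    (fun t => wPt m n (P t)) (fun t => h.nonneg t)
    (by rw [Fin.sum_univ_eq_sum_range L, h.sum_eq, sum_baryCoords]) (Set.mem_range_self ·) ?_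
  rw [sum_smul_wPt]
  congr 1 <;> ext a <;> rw [sum_smul_stdVert_apply]
  · rw [Fin.sum_univ_eq_sum_range (fun t => (Pi.single (P t).1 (L t) : ℕ → ℝ)), h.fst,
      baryCoords_succ]
  · rw [Fin.sum_univ_eq_sum_range (fun t => (Pi.single (P t).2 (L t) : ℕ → ℝ)), h.snd,
      baryCoords_succ]

/-- `Δ_m × Δ_n` is the union of the staircase simplices: every point `(x,y)` with
`x ∈ Δ_m`, `y ∈ Δ_n` lies in the convex hull of `{w(p_t)}` for some staircase `p`, and
conversely each such convex hull is contained in `Δ_m × Δ_n`. -/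
theorem staircase_simplices_cover (m n : ℕ) :
    (∀ x : Fin m → ℝ, ∀ y : Fin n → ℝ,
      (∀ i, 0 ≤ x i) → ∑ i, x i ≤ 1 → (∀ j, 0 ≤ y j) → ∑ j, y j ≤ 1 →
        ∃ p : Fin (m + n + 1) → ℕ × ℕ, IsStaircase m n p ∧
          Fin.append x y ∈ convexHull ℝ (Set.range fun t => wPt m n (p t))) ∧
    (∀ p : Fin (m + n + 1) → ℕ × ℕ, IsStaircase m n p →
      ∀ z ∈ convexHull ℝ (Set.range fun t => wPt m n (p t)),
        ∃ x : Fin m → ℝ, ∃ y : Fin n → ℝ,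
          (∀ i, 0 ≤ x i) ∧ ∑ i, x i ≤ 1 ∧ (∀ j, 0 ≤ y j) ∧ ∑ j, y j ≤ 1 ∧
            z = Fin.append x y) := by
  refine ⟨fun x y hx hxs hy hys => ?_, fun p _ z hz => ?_⟩
  · have hx' : x ∈ cornerSimplex (Fin m) := ⟨hx, hxs⟩
    have hy' : y ∈ cornerSimplex (Fin n) := ⟨hy, hys⟩
    obtain ⟨P, L, h⟩ := exists_isStaircaseCoupling (baryCoords_nonneg hx') (baryCoords_nonneg hy')
      (fun _ => baryCoords_of_lt x) (fun _ => baryCoords_of_lt y)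
      (by rw [sum_baryCoords, sum_baryCoords])
    exact ⟨_, h.path.isStaircase, h.append_mem_convexHull⟩
  · obtain ⟨x, ⟨hx, hxs⟩, y, ⟨hy, hys⟩, rfl⟩ := exists_append_of_mem_convexHull_wPt m n p hz
    exact ⟨x, y, hx, hxs, hy, hys, rfl⟩
end

section
/- Let m, n be natural numbers and let P = (p_0,…,p_{m+n}) and Q = (q_0,…,q_{m+n}) be two staircases from (0,0) to (m,n). Then the intersection of the two staircase simplices is the convex hull of their common vertices: conv{w(p_t) : 0 ≤ t ≤ m+n} ∩ conv{w(q_t) : 0 ≤ t ≤ m+n} = conv({w(p_t) : 0 ≤ t ≤ m+n} ∩ {w(q_t) : 0 ≤ t ≤ m+n}). -/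
namespace StaircaseAux
open Finset

variable {m n : ℕ} {p q : Fin (m + n + 1) → ℕ × ℕ}

lemma staircase_sum (hp : IsStaircase m n p) (t : Fin (m + n + 1)) :
    (p t).1 + (p t).2 = (t : ℕ) := by
  induction t using Fin.induction with
  | zero => simp [hp.1]
  | succ t ih =>
    rw [Fin.coe_castSucc] at ih
    rcases hp.2.2 t with h | h <;> simp [h, Fin.val_succ] <;> omega

lemma staircase_fst_mono (hp : IsStaircase m n p) : Monotone fun t => (p t).1 := by
  refine Fin.monotone_iff_le_succ.2 fun t => ?_
  rcases hp.2.2 t with h | h <;> simp [h]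

lemma staircase_snd_mono (hp : IsStaircase m n p) : Monotone fun t => (p t).2 := by
  refine Fin.monotone_iff_le_succ.2 fun t => ?_
  rcases hp.2.2 t with h | h <;> simp [h]

lemma staircase_fst_le (hp : IsStaircase m n p) (t : Fin (m + n + 1)) : (p t).1 ≤ m := by
  have := staircase_fst_mono hp (Fin.le_last t)
  simpa [hp.2.1] using this

lemma staircase_snd_le (hp : IsStaircase m n p) (t : Fin (m + n + 1)) : (p t).2 ≤ n := by
  have := staircase_snd_mono hp (Fin.le_last t)
  simpa [hp.2.1] using this

/-- tail sum of weights from index `t` on. -/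
noncomputable def tailSum {N : ℕ} (lam : Fin N → ℝ) (t : ℕ) : ℝ :=
  ∑ s : Fin N, if t ≤ (s : ℕ) then lam s else 0

lemma tailSum_succ_le {N : ℕ} {lam : Fin N → ℝ} (h0 : ∀ s, 0 ≤ lam s) (t : ℕ) :
    tailSum lam (t + 1) ≤ tailSum lam t := by
  refine Finset.sum_le_sum fun s _ => ?_
  split_ifs <;> first | omega | exact h0 s | exact le_rfl

lemma tailSum_eq {N : ℕ} (lam : Fin N → ℝ) (t : Fin N) :
    tailSum lam (t : ℕ) = lam t + tailSum lam ((t : ℕ) + 1) := by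
  have : tailSum lam (t : ℕ) =
      ∑ s : Fin N, ((if s = t then lam s else 0) + if (t : ℕ) + 1 ≤ (s : ℕ) then lam s else 0) := by
    refine Finset.sum_congr rfl fun s _ => ?_
    rcases eq_or_ne s t with rfl | hne
    · simp
    · have : (s : ℕ) ≠ (t : ℕ) := fun h => hne (Fin.ext h)
      split_ifs <;> simp_all <;> omega
  rw [this, Finset.sum_add_distrib, Finset.sum_ite_eq' _ t, if_pos (mem_univ t)]
  rfl

lemma stdVert_sum {d : ℕ} (k i : ℕ) (hk : 1 ≤ k) (hi : i ≤ d) :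
    (∑ a : Fin d, if k ≤ (a : ℕ) + 1 then stdVert d i a else 0) = if k ≤ i then 1 else 0 := by
  by_cases hki : k ≤ i
  · have h1i : 1 ≤ i := hk.trans hki
    have hlt : i - 1 < d := by omega
    rw [if_pos hki]
    have : ∀ a : Fin d,
        (if k ≤ (a : ℕ) + 1 then stdVert d i a else 0) =
          if a = (⟨i - 1, hlt⟩ : Fin d) then 1 else 0 := by
      intro a
      simp only [stdVert, Fin.ext_iff]
      split_ifs <;> simp_all <;> omega
    rw [Finset.sum_congr rfl fun a _ => this a, Finset.sum_ite_eq' _ _,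
      if_pos (mem_univ _)]
  · rw [if_neg hki]
    refine Finset.sum_eq_zero fun a _ => ?_
    simp only [stdVert]
    split_ifs <;> simp_all <;> omega

lemma fstBlock_sum (lam : Fin (m + n + 1) → ℝ) (k : ℕ) (hk : 1 ≤ k)
    (hple : ∀ s, (p s).1 ≤ m) :
    (∑ a : Fin m, if k ≤ (a : ℕ) + 1 then (∑ s, lam s • wPt m n (p s)) (Fin.castAdd n a) else 0)
      = ∑ s, lam s * (if k ≤ (p s).1 then 1 else 0) := by
  have happ : ∀ a : Fin m, (∑ s, lam s • wPt m n (p s)) (Fin.castAdd n a)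
      = ∑ s, lam s * stdVert m (p s).1 a := by
    intro a
    rw [Finset.sum_apply]
    refine Finset.sum_congr rfl fun s _ => ?_
    simp [wPt, Fin.append_left]
  calc (∑ a : Fin m, if k ≤ (a : ℕ) + 1 then (∑ s, lam s • wPt m n (p s)) (Fin.castAdd n a) else 0)
      = ∑ a : Fin m, ∑ s, lam s * (if k ≤ (a : ℕ) + 1 then stdVert m (p s).1 a else 0) := by
        refine Finset.sum_congr rfl fun a _ => ?_
        rw [happ a]
        split_ifs with h
        · rfl
        · simp
    _ = ∑ s, lam s * ∑ a : Fin m, (if k ≤ (a : ℕ) + 1 then stdVert m (p s).1 a else 0) := by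
        rw [Finset.sum_comm]
        simp [Finset.mul_sum]
    _ = ∑ s, lam s * (if k ≤ (p s).1 then 1 else 0) := by
        refine Finset.sum_congr rfl fun s _ => ?_
        rw [stdVert_sum k _ hk (hple s)]

lemma sndBlock_sum (lam : Fin (m + n + 1) → ℝ) (k : ℕ) (hk : 1 ≤ k)
    (hple : ∀ s, (p s).2 ≤ n) :
    (∑ a : Fin n, if k ≤ (a : ℕ) + 1 then (∑ s, lam s • wPt m n (p s)) (Fin.natAdd m a) else 0)
      = ∑ s, lam s * (if k ≤ (p s).2 then 1 else 0) := by
  have happ : ∀ a : Fin n, (∑ s, lam s • wPt m n (p s)) (Fin.natAdd m a)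
      = ∑ s, lam s * stdVert n (p s).2 a := by
    intro a
    rw [Finset.sum_apply]
    refine Finset.sum_congr rfl fun s _ => ?_
    simp [wPt, Fin.append_right]
  calc (∑ a : Fin n, if k ≤ (a : ℕ) + 1 then (∑ s, lam s • wPt m n (p s)) (Fin.natAdd m a) else 0)
      = ∑ a : Fin n, ∑ s, lam s * (if k ≤ (a : ℕ) + 1 then stdVert n (p s).2 a else 0) := by
        refine Finset.sum_congr rfl fun a _ => ?_
        rw [happ a]
        split_ifs with h
        · rfl
        · simp
    _ = ∑ s, lam s * ∑ a : Fin n, (if k ≤ (a : ℕ) + 1 then stdVert n (p s).2 a else 0) := by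
        rw [Finset.sum_comm]
        simp [Finset.mul_sum]
    _ = ∑ s, lam s * (if k ≤ (p s).2 then 1 else 0) := by
        refine Finset.sum_congr rfl fun s _ => ?_
        rw [stdVert_sum k _ hk (hple s)]

lemma sandwich_fst (hp : IsStaircase m n p) (hq : IsStaircase m n q)
    {lam mu : Fin (m + n + 1) → ℝ} (hl0 : ∀ s, 0 ≤ lam s) (hm0 : ∀ s, 0 ≤ mu s)
    (hx : ∑ s, lam s • wPt m n (p s) = ∑ s, mu s • wPt m n (q s))
    (t : Fin (m + n + 1)) (h : (p t).1 < (q t).1) :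
    tailSum mu (t : ℕ) ≤ tailSum lam ((t : ℕ) + 1) := by
  set k := (p t).1 + 1 with hkdef
  have hE : (∑ s, mu s * (if k ≤ (q s).1 then 1 else 0))
      = ∑ s, lam s * (if k ≤ (p s).1 then 1 else 0) := by
    rw [← fstBlock_sum (p := q) mu k (by omega) (staircase_fst_le hq),
      ← fstBlock_sum (p := p) lam k (by omega) (staircase_fst_le hp), hx]
  have h1 : tailSum mu (t : ℕ) ≤ ∑ s, mu s * (if k ≤ (q s).1 then 1 else 0) := by
    refine Finset.sum_le_sum fun s _ => ?_
    by_cases hts : (t : ℕ) ≤ (s : ℕ)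
    · have hmono : (q t).1 ≤ (q s).1 := staircase_fst_mono hq (Fin.le_def.2 hts)
      rw [if_pos hts, if_pos (by omega), mul_one]
    · rw [if_neg hts]
      exact mul_nonneg (hm0 s) (by positivity)
  have h2 : (∑ s, lam s * (if k ≤ (p s).1 then 1 else 0)) ≤ tailSum lam ((t : ℕ) + 1) := by
    refine Finset.sum_le_sum fun s _ => ?_
    by_cases hks : k ≤ (p s).1
    · have hts : (t : ℕ) + 1 ≤ (s : ℕ) := by
        by_contra hc
        have : (p s).1 ≤ (p t).1 := staircase_fst_mono hp (Fin.le_def.2 (by omega))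
        omega
      rw [if_pos hks, if_pos hts, mul_one]
    · rw [if_neg hks, mul_zero]
      split_ifs with h'
      · exact hl0 s
      · exact le_rfl
  rw [hE] at h1
  exact h1.trans h2

lemma sandwich_snd (hp : IsStaircase m n p) (hq : IsStaircase m n q)
    {lam mu : Fin (m + n + 1) → ℝ} (hl0 : ∀ s, 0 ≤ lam s) (hm0 : ∀ s, 0 ≤ mu s)
    (hx : ∑ s, lam s • wPt m n (p s) = ∑ s, mu s • wPt m n (q s))
    (t : Fin (m + n + 1)) (h : (p t).2 < (q t).2) :
    tailSum mu (t : ℕ) ≤ tailSum lam ((t : ℕ) + 1) := by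
  set k := (p t).2 + 1 with hkdef
  have hE : (∑ s, mu s * (if k ≤ (q s).2 then 1 else 0))
      = ∑ s, lam s * (if k ≤ (p s).2 then 1 else 0) := by
    rw [← sndBlock_sum (p := q) mu k (by omega) (staircase_snd_le hq),
      ← sndBlock_sum (p := p) lam k (by omega) (staircase_snd_le hp), hx]
  have h1 : tailSum mu (t : ℕ) ≤ ∑ s, mu s * (if k ≤ (q s).2 then 1 else 0) := by
    refine Finset.sum_le_sum fun s _ => ?_
    by_cases hts : (t : ℕ) ≤ (s : ℕ)
    · have hmono : (q t).2 ≤ (q s).2 := staircase_snd_mono hq (Fin.le_def.2 hts)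
      rw [if_pos hts, if_pos (by omega), mul_one]
    · rw [if_neg hts]
      exact mul_nonneg (hm0 s) (by positivity)
  have h2 : (∑ s, lam s * (if k ≤ (p s).2 then 1 else 0)) ≤ tailSum lam ((t : ℕ) + 1) := by
    refine Finset.sum_le_sum fun s _ => ?_
    by_cases hks : k ≤ (p s).2
    · have hts : (t : ℕ) + 1 ≤ (s : ℕ) := by
        by_contra hc
        have : (p s).2 ≤ (p t).2 := staircase_snd_mono hp (Fin.le_def.2 (by omega))
        omega
      rw [if_pos hks, if_pos hts, mul_one]
    · rw [if_neg hks, mul_zero]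
      split_ifs with h'
      · exact hl0 s
      · exact le_rfl
  rw [hE] at h1
  exact h1.trans h2

lemma weight_zero (hp : IsStaircase m n p) (hq : IsStaircase m n q)
    {lam mu : Fin (m + n + 1) → ℝ} (hl0 : ∀ s, 0 ≤ lam s) (hm0 : ∀ s, 0 ≤ mu s)
    (hx : ∑ s, lam s • wPt m n (p s) = ∑ s, mu s • wPt m n (q s))
    (t : Fin (m + n + 1)) (hne : p t ≠ q t) : lam t = 0 := by
  have hsp := staircase_sum hp t
  have hsq := staircase_sum hq t
  have h1 : (p t).1 ≠ (q t).1 := by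
    intro h
    exact hne (Prod.ext h (by omega))
  have key : tailSum mu (t : ℕ) ≤ tailSum lam ((t : ℕ) + 1) ∧
      tailSum lam (t : ℕ) ≤ tailSum mu ((t : ℕ) + 1) := by
    rcases lt_or_gt_of_ne h1 with h | h
    · exact ⟨sandwich_fst hp hq hl0 hm0 hx t h,
        sandwich_snd hq hp hm0 hl0 hx.symm t (by omega)⟩
    · exact ⟨sandwich_snd hp hq hl0 hm0 hx t (by omega),
        sandwich_fst hq hp hm0 hl0 hx.symm t h⟩
  have hA := key.1
  have hB := key.2
  have hC := tailSum_succ_le hm0 (t : ℕ)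
  have hD := tailSum_eq lam t
  have hl := hl0 t
  linarith

end StaircaseAux

open StaircaseAux Finset

/-- Any two staircase simplices of `Δ_m × Δ_n` intersect in the convex hull of their
common vertices (the face-to-face property of the staircase triangulation). -/
theorem staircase_simplices_intersect_in_face (m n : ℕ)
    (p q : Fin (m + n + 1) → ℕ × ℕ)
    (hp : IsStaircase m n p) (hq : IsStaircase m n q) :
    convexHull ℝ (Set.range fun t => wPt m n (p t)) ∩
        convexHull ℝ (Set.range fun t => wPt m n (q t)) =
      convexHull ℝ
        ((Set.range fun t => wPt m n (p t)) ∩ (Set.range fun t => wPt m n (q t))) := by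
  apply Set.Subset.antisymm
  · rintro x ⟨hxp, hxq⟩
    rw [convexHull_range_eq_exists_affineCombination] at hxp hxq
    obtain ⟨sP, wp, hwP0, hwP1, hxP⟩ := hxp
    obtain ⟨sQ, wq, hwQ0, hwQ1, hxQ⟩ := hxq
    set lam : Fin (m + n + 1) → ℝ := fun t => if t ∈ sP then wp t else 0 with hlam
    set mu : Fin (m + n + 1) → ℝ := fun t => if t ∈ sQ then wq t else 0 with hmu
    have hl0 : ∀ s, 0 ≤ lam s := by
      intro s
      by_cases h : s ∈ sP <;> simp [hlam, h]
      exact hwP0 s h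
    have hm0 : ∀ s, 0 ≤ mu s := by
      intro s
      by_cases h : s ∈ sQ <;> simp [hmu, h]
      exact hwQ0 s h
    have hl1 : ∑ s, lam s = 1 := by
      rw [hlam]
      simp only [Finset.sum_ite_mem, Finset.univ_inter]
      exact hwP1
    have hxl : ∑ s, lam s • wPt m n (p s) = x := by
      rw [← hxP, Finset.affineCombination_eq_linear_combination _ _ _ hwP1]
      simp [hlam, ite_smul, Finset.sum_ite_mem]
    have hxm : ∑ s, mu s • wPt m n (q s) = x := by
      rw [← hxQ, Finset.affineCombination_eq_linear_combination _ _ _ hwQ1]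
      simp [hmu, ite_smul, Finset.sum_ite_mem]
    have hx : ∑ s, lam s • wPt m n (p s) = ∑ s, mu s • wPt m n (q s) := by rw [hxl, hxm]
    have hkey : ∀ t, lam t ≠ 0 → p t = q t := by
      intro t ht
      by_contra hne
      exact ht (weight_zero hp hq hl0 hm0 hx t hne)
    set F : Finset (Fin (m + n + 1)) := Finset.univ.filter fun t => lam t ≠ 0 with hF
    have hsum1 : ∑ t ∈ F, lam t = 1 := by
      rw [hF, Finset.sum_filter_ne_zero]
      exact hl1
    have hsumx : ∑ t ∈ F, lam t • wPt m n (p t) = x := by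
      rw [← hxl, hF]
      refine Finset.sum_filter_of_ne fun t _ hft h0 => hft ?_
      rw [h0, zero_smul]
    rw [← hsumx]
    refine Convex.sum_mem (convex_convexHull ℝ _) (fun i _ => hl0 i) hsum1 (fun i hi => ?_)
    apply subset_convexHull
    have hiQ : p i = q i := hkey i (Finset.mem_filter.1 hi).2
    exact ⟨⟨i, rfl⟩, ⟨i, by rw [hiQ]⟩⟩
  · exact Set.subset_inter (convexHull_mono Set.inter_subset_left)
      (convexHull_mono Set.inter_subset_right)
end

section
/- Let m, n be natural numbers and define ω(i,j) = 2^{(n+1)·i + (n−j)} for (i,j) ∈ {0,…,m}×{0,…,n}. Then for every staircase p_0,…,p_{m+n} from (0,0) to (m,n) there exists an affine map A : ℝ^{m+n} → ℝ such that A(w(p_t)) = ω(p_t) for every t ∈ {0,…,m+n}, and A(w(i,j)) < ω(i,j) for every (i,j) ∈ {0,…,m}×{0,…,n} that does not occur among p_0,…,p_{m+n}. (Hence ω is a lifting function whose lower convex hull induces the staircase triangulation, so the staircase triangulation of Δ_m × Δ_n is regular.) -/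
/-- The lifting function `ω(i,j) = 2^{(n+1)·i + (n−j)}` given by the lexrev ordering. -/
noncomputable def liftFn (n : ℕ) (v : ℕ × ℕ) : ℝ := 2 ^ ((n + 1) * v.1 + (n - v.2))

/-!
`ω(i,j) = 2^((n+1)i) · 2^(n-j)` is an increasing function of `i` times a decreasing function
of `j`, hence strictly submodular: `ω(i,j) + ω(i',j') < ω(i,j') + ω(i',j)` for `i < i'`,
`j < j'`. An affine map takes the value `A 0 + a i + b j` at `w(i,j)`, so it suffices to find
potentials with `a i + b j ≤ ω(i,j)` on the box, with equality exactly on the staircase. They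
are built along the staircase: a horizontal step to `(X+1, Y)` forces
`a (X+1) = ω(X+1,Y) - b Y`, and the rest of the new column stays strictly below `ω` because
`a X + b Y = ω(X,Y)`, `a X + b j ≤ ω(X,j)` and `ω` is strictly submodular on the square
`{X, X+1} × {j, Y}`. Vertical steps are the same after swapping the coordinates.
-/

open Set Function

def IsStrictlySubmodularOn (ω : ℕ × ℕ → ℝ) (v : ℕ × ℕ) : Prop :=
  ∀ ⦃i i' j j' : ℕ⦄, i < i' → j < j' → (i', j') ≤ v →
    ω (i, j) + ω (i', j') < ω (i, j') + ω (i', j)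

namespace IsStrictlySubmodularOn

variable {ω : ℕ × ℕ → ℝ} {v w : ℕ × ℕ}

lemma mono (hω : IsStrictlySubmodularOn ω w) (hvw : v ≤ w) : IsStrictlySubmodularOn ω v :=
  fun _ _ _ _ hi hj hle => hω hi hj (hle.trans hvw)

lemma swap (hω : IsStrictlySubmodularOn ω v) : IsStrictlySubmodularOn (ω ∘ Prod.swap) v.swap :=
  fun _ _ _ _ hi hj hle => by
    have := hω hj hi (Prod.swap_le_mk.mp hle)
    simp only [comp_apply, Prod.swap_prod_mk]
    linarith

end IsStrictlySubmodularOn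

lemma isStrictlySubmodularOn_mul {f g : ℕ → ℝ} {v : ℕ × ℕ} (hf : StrictMonoOn f (Iic v.1))
    (hg : StrictAntiOn g (Iic v.2)) : IsStrictlySubmodularOn (fun x => f x.1 * g x.2) v := by
  intro i i' j j' hi hj hle
  have hf' : f i < f i' := hf (mem_Iic.2 (hi.le.trans hle.1)) (mem_Iic.2 hle.1) hi
  have hg' : g j' < g j := hg (mem_Iic.2 (hj.le.trans hle.2)) (mem_Iic.2 hle.2) hj
  nlinarith [mul_pos (sub_pos.2 hf') (sub_pos.2 hg')]

lemma liftFn_isStrictlySubmodularOn (m n : ℕ) : IsStrictlySubmodularOn (liftFn n) (m, n) := by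
  have hprod : liftFn n = fun x => (2 : ℝ) ^ ((n + 1) * x.1) * 2 ^ (n - x.2) :=
    funext fun _ => pow_add _ _ _
  rw [hprod]
  refine isStrictlySubmodularOn_mul (f := fun i => (2 : ℝ) ^ ((n + 1) * i))
    (g := fun j => (2 : ℝ) ^ (n - j)) (fun i _ i' _ hi => ?_) (fun j _ j' hj' hj => ?_)
  · exact pow_lt_pow_right₀ one_lt_two (Nat.mul_lt_mul_of_pos_left hi n.succ_pos)
  · exact pow_lt_pow_right₀ one_lt_two (by simp only [mem_Iic] at hj'; omega)

def IsTightMinorant (ω : ℕ × ℕ → ℝ) (a b : ℕ → ℝ) (v : ℕ × ℕ) (S : Set (ℕ × ℕ)) : Prop :=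
  S ⊆ Iic v ∧ ∀ x ≤ v, a x.1 + b x.2 ≤ ω x ∧ (x ∈ S ↔ a x.1 + b x.2 = ω x)

lemma isTightMinorant_zero (ω : ℕ × ℕ → ℝ) : IsTightMinorant ω 0 (fun _ => ω 0) 0 {0} := by
  refine ⟨by simp, fun x hx => ?_⟩
  obtain rfl : x = 0 := Prod.ext (Nat.le_zero.mp hx.1) (Nat.le_zero.mp hx.2)
  simp

namespace IsTightMinorant

variable {ω : ℕ × ℕ → ℝ} {a b : ℕ → ℝ} {S : Set (ℕ × ℕ)}

lemma swap {v : ℕ × ℕ} (h : IsTightMinorant ω a b v S) :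
    IsTightMinorant (ω ∘ Prod.swap) b a v.swap (Prod.swap ⁻¹' S) := by
  refine ⟨fun x hx => Prod.swap_le_swap.mpr (h.1 hx), fun x hx => ?_⟩
  simpa only [comp_apply, mem_preimage, Prod.fst_swap, Prod.snd_swap, add_comm (b _)] using
    h.2 x.swap (Prod.swap_le_mk.mp hx)

lemma extend_right {X Y : ℕ} (h : IsTightMinorant ω a b (X, Y) S) (hXY : (X, Y) ∈ S)
    (hω : IsStrictlySubmodularOn ω (X + 1, Y)) :
    IsTightMinorant ω (update a (X + 1) (ω (X + 1, Y) - b Y)) b (X + 1, Y)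
      (insert (X + 1, Y) S) := by
  refine ⟨insert_subset (mem_Iic.2 le_rfl) (h.1.trans (Iic_subset_Iic.2 (by simp))), ?_⟩
  rintro ⟨i, j⟩ hij
  obtain ⟨hi, hj⟩ := Prod.mk_le_mk.mp hij
  rcases hi.lt_or_eq with hi | rfl
  · have hmem : (i, j) ∈ insert (X + 1, Y) S ↔ (i, j) ∈ S :=
      or_iff_right (by simp only [Prod.mk.injEq]; omega)
    rw [update_of_ne (by omega), hmem]
    exact h.2 (i, j) (Prod.mk_le_mk.mpr ⟨Nat.le_of_lt_succ hi, hj⟩)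
  rw [update_self]
  rcases hj.lt_or_eq with hj | rfl
  · have hlt : ω (X + 1, Y) - b Y + b j < ω (X + 1, j) := by
      have hY := ((h.2 (X, Y) le_rfl).2.mp hXY)
      have hj' := (h.2 (X, j) (Prod.mk_le_mk.mpr ⟨le_rfl, hj.le⟩)).1
      have := hω (lt_add_one X) hj le_rfl
      linarith
    have hnot : (X + 1, j) ∉ insert (X + 1, Y) S := by
      rintro (hY | hS)
      · exact hj.ne (Prod.mk.inj hY).2
      · exact absurd (Prod.mk_le_mk.mp (h.1 hS)).1 (by omega)
    exact ⟨hlt.le, iff_of_false hnot hlt.ne⟩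
  · rw [sub_add_cancel]
    exact ⟨le_rfl, iff_of_true (mem_insert _ _) rfl⟩

lemma extend_up {X Y : ℕ} (h : IsTightMinorant ω a b (X, Y) S) (hXY : (X, Y) ∈ S)
    (hω : IsStrictlySubmodularOn ω (X, Y + 1)) :
    IsTightMinorant ω a (update b (Y + 1) (ω (X, Y + 1) - a X)) (X, Y + 1)
      (insert (X, Y + 1) S) := by
  have := (h.swap.extend_right (by simpa using hXY) hω.swap).swap
  have hS : Prod.swap ⁻¹' insert (Y + 1, X) (Prod.swap ⁻¹' S) = insert (X, Y + 1) S := by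
    ext ⟨i, j⟩
    simp [and_comm]
  simpa only [Prod.swap_prod_mk, comp_assoc, Prod.swap_swap_eq, comp_id, comp_apply, hS] using this

end IsTightMinorant

namespace IsStaircase

variable {m n : ℕ} {p : Fin (m + n + 1) → ℕ × ℕ}

lemma monotone (hp : IsStaircase m n p) : Monotone p :=
  Fin.monotone_iff_le_succ.2 fun t => by rcases hp.2.2 t with h | h <;> simp [h]

lemma le_last (hp : IsStaircase m n p) (t : Fin (m + n + 1)) : p t ≤ (m, n) :=
  hp.2.1 ▸ hp.monotone (Fin.le_last t)

lemma exists_isTightMinorant_Iic (hp : IsStaircase m n p) {ω : ℕ × ℕ → ℝ}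
    (hω : IsStrictlySubmodularOn ω (m, n)) (t : Fin (m + n + 1)) :
    ∃ a b, IsTightMinorant ω a b (p t) (p '' Iic t) := by
  induction t using Fin.induction with
  | zero =>
    rw [← bot_eq_zero, Iic_bot, image_singleton, bot_eq_zero, hp.1]
    exact ⟨_, _, isTightMinorant_zero ω⟩
  | succ t ih =>
    obtain ⟨a, b, h⟩ := ih
    have hmem : p t.castSucc ∈ p '' Iic t.castSucc := mem_image_of_mem p (mem_Iic.2 le_rfl)
    have hωt := hω.mono (hp.le_last t.succ)
    rw [← Fin.orderSucc_castSucc, Order.Iic_succ, image_insert_eq, Fin.orderSucc_castSucc]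
    rcases hp.2.2 t with hstep | hstep <;> rw [hstep] at hωt ⊢ <;>
      generalize p t.castSucc = v at h hmem hωt ⊢ <;> obtain ⟨X, Y⟩ := v <;>
      simp only [Prod.mk_add_mk, add_zero] at hωt ⊢
    · exact ⟨_, _, h.extend_right hmem hωt⟩
    · exact ⟨_, _, h.extend_up hmem hωt⟩

lemma exists_isTightMinorant (hp : IsStaircase m n p) {ω : ℕ × ℕ → ℝ}
    (hω : IsStrictlySubmodularOn ω (m, n)) :
    ∃ a b, IsTightMinorant ω a b (m, n) (range p) := by
  have h := hp.exists_isTightMinorant_Iic hω (Fin.last _)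
  rwa [hp.2.1, ← Fin.top_eq_last, Iic_top, image_univ] at h

end IsStaircase

lemma stdVert_zero (d : ℕ) : stdVert d 0 = 0 := by
  ext a
  simp [stdVert]

lemma stdVert_succ {d k : ℕ} (hk : k < d) : stdVert d (k + 1) = Pi.single ⟨k, hk⟩ 1 := by
  ext a
  simp [stdVert, Pi.single_apply, Fin.ext_iff]

lemma dotProduct_stdVert (f : ℕ → ℝ) {d i : ℕ} (hi : i ≤ d) :
    (fun k : Fin d => f (k + 1) - f 0) ⬝ᵥ stdVert d i = f i - f 0 := by
  cases i with
  | zero => simp [stdVert_zero]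
  | succ k => simp [stdVert_succ hi]

lemma exists_affineMap_apply_wPt (m n : ℕ) (a b : ℕ → ℝ) :
    ∃ A : (Fin (m + n) → ℝ) →ᵃ[ℝ] ℝ, ∀ x ≤ (m, n), A (wPt m n x) = a x.1 + b x.2 := by
  let u : Fin (m + n) → ℝ :=
    Fin.append (fun k : Fin m => a (k + 1) - a 0) (fun k : Fin n => b (k + 1) - b 0)
  refine ⟨(dotProductBilin ℝ ℝ u).toAffineMap + AffineMap.const ℝ _ (a 0 + b 0),
    fun x hx => ?_⟩
  have hsplit : u ⬝ᵥ wPt m n x = (fun k : Fin m => a (k + 1) - a 0) ⬝ᵥ stdVert m x.1 +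
      (fun k : Fin n => b (k + 1) - b 0) ⬝ᵥ stdVert n x.2 := by
    simp only [dotProduct, wPt, u, Fin.sum_univ_add, Fin.append_left, Fin.append_right]
  simp only [AffineMap.coe_add, Pi.add_apply, LinearMap.coe_toAffineMap,
    dotProductBilin_apply_apply, AffineMap.const_apply, hsplit, dotProduct_stdVert a hx.1, dotProduct_stdVert b hx.2]
  ring

/-- `ω(i,j) = 2^{(n+1)i + (n−j)}` is a lifting function inducing the staircase
triangulation: for every staircase `p` there is an affine map `A : ℝ^{m+n} → ℝ` with
`A(w(p_t)) = ω(p_t)` for all `t`, and `A(w(i,j)) < ω(i,j)` for all vertices `(i,j)` of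
`Δ_m × Δ_n` not occurring on the staircase.  Hence the staircase triangulation is
regular. -/
theorem staircase_triangulation_regular (m n : ℕ) (p : Fin (m + n + 1) → ℕ × ℕ)
    (hp : IsStaircase m n p) :
    ∃ A : (Fin (m + n) → ℝ) →ᵃ[ℝ] ℝ,
      (∀ t, A (wPt m n (p t)) = liftFn n (p t)) ∧
      ∀ i j : ℕ, i ≤ m → j ≤ n → (i, j) ∉ Set.range p →
        A (wPt m n (i, j)) < liftFn n (i, j) := by
  obtain ⟨a, b, -, hab⟩ := hp.exists_isTightMinorant (liftFn_isStrictlySubmodularOn m n)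
  obtain ⟨A, hA⟩ := exists_affineMap_apply_wPt m n a b
  refine ⟨A, fun t => ?_, fun i j hi hj hij => ?_⟩
  · rw [hA _ (hp.le_last t)]
    exact (hab _ (hp.le_last t)).2.mp (mem_range_self t)
  · have hle : (i, j) ≤ (m, n) := Prod.mk_le_mk.mpr ⟨hi, hj⟩
    rw [hA _ hle]
    exact lt_of_le_of_ne (hab _ hle).1 fun h => hij ((hab _ hle).2.mpr h)
end

section
/- Let m, n be natural numbers. The simple graph whose vertices are the staircases from (0,0) to (m,n), with two distinct staircases adjacent if and only if their sets of visited lattice points share exactly m+n points, is 2-colorable (bipartite); a proper 2-coloring is given by the parity of the sum Σ_{k=1}^m s(F)_k of the coordinates of the associated vector s(F). -/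
/-- The dual graph of the staircase triangulation of `Δ_m × Δ_n`: vertices are the
staircases from `(0,0)` to `(m,n)`, two distinct staircases being adjacent iff their
sets of visited lattice points share exactly `m+n` points. -/
def staircaseDualGraph (m n : ℕ) :
    SimpleGraph {p : Fin (m + n + 1) → ℕ × ℕ // IsStaircase m n p} :=
  SimpleGraph.fromRel fun P Q =>
    ((Finset.univ.image P.1) ∩ (Finset.univ.image Q.1)).card = m + n

open Finset

namespace Fin

variable {N : ℕ}

theorem add_sum_eq_last_of_succ {M : Type*} [AddCommMonoid M] {f : Fin (N + 1) → M}
    {d : Fin N → M} (h : ∀ i, f i.succ = f i.castSucc + d i) :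
    f 0 + ∑ i, d i = f (last N) := by
  induction N with
  | zero => simp [Fin.last]
  | succ N ih =>
    have ih' := ih (f := f ∘ castSucc) (d := d ∘ castSucc) fun i => by simpa using h i.castSucc
    rw [sum_univ_castSucc, ← add_assoc, ← succ_last, h (last N)]
    simpa using congrArg (· + d (last N)) ih'

theorem sum_val_mul_add_sum_succ_eq_mul_last {R : Type*} [CommSemiring R] {f : Fin (N + 1) → R}
    {d : Fin N → R} (h : ∀ i, f i.succ = f i.castSucc + d i) :
    ∑ i : Fin N, (i : R) * d i + ∑ i : Fin N, f i.succ = N * f (last N) := by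
  induction N with
  | zero => simp
  | succ N ih =>
    have ih' := ih (f := f ∘ castSucc) (d := d ∘ castSucc) fun i => by simpa using h i.castSucc
    simp only [Function.comp_apply, ← succ_castSucc, ← succ_last] at ih' ⊢
    rw [sum_univ_castSucc, sum_univ_castSucc, h (last N)]
    simp only [val_castSucc, val_last, succ_castSucc] at ih' ⊢
    calc _ = (∑ i : Fin N, (i : R) * d i.castSucc + ∑ i : Fin N, f i.succ.castSucc)
          + (N + 1) * d (last N) + f (last N).castSucc := by ring
      _ = _ := by rw [ih']; push_cast; ring

end Fin

theorem List.SortedLT.le_getElem {l : List ℕ} (hl : l.SortedLT) {i : ℕ} (hi : i < l.length) :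
    i ≤ l[i] := by
  induction i with
  | zero => omega
  | succ i ih =>
    have hlt : l[i] < l[i + 1] := hl.getElem_lt_getElem_iff.2 i.lt_succ_self
    have := ih (Nat.lt_of_succ_lt hi)
    omega

theorem List.SortedLT.sum_range_getD_sub_add_sum_range {l : List ℕ} (hl : l.SortedLT) :
    ∑ k ∈ Finset.range l.length, (l.getD k 0 - k) + ∑ k ∈ Finset.range l.length, k =
      l.sum := by
  rw [← Finset.sum_add_distrib, ← Fin.sum_univ_getElem l,
    ← Fin.sum_univ_eq_sum_range (fun k => l.getD k 0 - k + k)]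
  refine Finset.sum_congr rfl fun k _ => ?_
  rw [List.getD_eq_getElem _ _ k.2]
  exact Nat.sub_add_cancel (hl.le_getElem k.2)

namespace IsStaircase

variable {m n : ℕ} {p q : Fin (m + n + 1) → ℕ × ℕ}

theorem sum_rightSteps_add_sum_fst (hp : IsStaircase m n p) :
    ∑ t ∈ rightSteps m n p, (t : ℕ) + ∑ j, (p j).1 = (m + n) * m := by
  have := Fin.sum_val_mul_add_sum_succ_eq_mul_last (f := fun j => (p j).1) hp.fst_succ
  simp only [hp.2.1] at this
  rw [Fin.sum_univ_succ, hp.1]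
  simpa [mul_boole, sum_ite_mem] using this

theorem sum_sVec_add_sum_val (hp : IsStaircase m n p) :
    ∑ k : Fin m, sVec m n p k + ∑ k : Fin m, (k : ℕ) =
      ∑ t ∈ rightSteps m n p, (t : ℕ) := by
  set l := ((rightSteps m n p).sort (· ≤ ·)).map Fin.val
  have hl : l.SortedLT :=
    Fin.val_strictMono.sortedLT_listMap.2 (rightSteps m n p).sortedLT_sort
  have := hl.sum_range_getD_sub_add_sum_range
  rw [List.length_map, length_sort, hp.card_rightSteps] at this
  rw [Finset.sum_eq_multiset_sum (rightSteps m n p), ← sort_eq (rightSteps m n p) (· ≤ ·),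
    Multiset.map_coe, Multiset.sum_coe, ← this, ← Fin.sum_univ_eq_sum_range (fun k => k),
    ← Fin.sum_univ_eq_sum_range (fun k => l.getD k 0 - k)]
  rfl

theorem image_inter_image (hp : IsStaircase m n p) (hq : IsStaircase m n q) :
    univ.image p ∩ univ.image q = ({t | p t = q t} : Finset _).image p := by
  ext x
  simp only [mem_inter, mem_image, mem_filter, mem_univ, true_and]
  constructor
  · rintro ⟨⟨s, rfl⟩, t, hts⟩
    obtain rfl : t = s := Fin.ext <| by rw [← hq.fst_add_snd t, ← hp.fst_add_snd s, hts]
    exact ⟨t, hts.symm, rfl⟩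
  · rintro ⟨t, hpq, rfl⟩
    exact ⟨⟨t, rfl⟩, t, hpq.symm⟩

theorem existsUnique_ne_of_card_image_inter_image (hp : IsStaircase m n p)
    (hq : IsStaircase m n q) (h : #(univ.image p ∩ univ.image q) = m + n) :
    ∃! t, p t ≠ q t := by
  rw [image_inter_image hp hq, card_image_of_injective _ hp.injective] at h
  have := card_filter_add_card_filter_not (s := univ) (p := fun t => p t = q t)
  rw [card_univ, Fintype.card_fin] at this
  rw [Fintype.existsUnique_iff_card_one]
  simp only [ne_eq]
  omega

theorem sum_fst_eq_add_one_or (hp : IsStaircase m n p) (hq : IsStaircase m n q)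
    (h : ∃! t, p t ≠ q t) :
    ∑ j, (p j).1 = ∑ j, (q j).1 + 1 ∨ ∑ j, (q j).1 = ∑ j, (p j).1 + 1 := by
  obtain ⟨t₀, hne, huniq⟩ := h
  have hagree : ∀ t ≠ t₀, p t = q t := fun t ht => not_not.1 (mt (huniq t) ht)
  obtain ⟨i, rfl⟩ : ∃ i, Fin.succ i = t₀ :=
    Fin.exists_succ_eq.2 fun h0 => hne (by rw [h0, hp.1, hq.1])
  have hstart : p i.castSucc = q i.castSucc := hagree _ Fin.castSucc_lt_succ.ne
  have hfst : (p i.succ).1 ≠ (q i.succ).1 := fun h1 => hne <| Prod.ext h1 <| by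
    have := hp.fst_add_snd i.succ
    have := hq.fst_add_snd i.succ
    omega
  rw [← add_sum_erase univ _ (mem_univ i.succ), ← add_sum_erase univ (fun j => (q j).1)
    (mem_univ i.succ), sum_congr rfl fun j hj => congrArg Prod.fst (hagree j (ne_of_mem_erase hj))]
  have := hp.fst_succ i
  have := hq.fst_succ i
  rw [hstart] at *
  split_ifs at * <;> omega

theorem sum_sVec_mod_two_ne (hp : IsStaircase m n p) (hq : IsStaircase m n q)
    (h : ∃! t, p t ≠ q t) :
    (∑ k, sVec m n p k) % 2 ≠ (∑ k, sVec m n q k) % 2 := by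
  have := hp.sum_sVec_add_sum_val
  have := hq.sum_sVec_add_sum_val
  have := hp.sum_rightSteps_add_sum_fst
  have := hq.sum_rightSteps_add_sum_fst
  have := hp.sum_fst_eq_add_one_or hq h
  omega

end IsStaircase

/-- The dual graph of the staircase triangulation of `Δ_m × Δ_n` is bipartite
(2-colorable); a proper 2-coloring is given by the parity of `∑_k s(F)_k`. -/
theorem staircaseDualGraph_bipartite (m n : ℕ) :
    (∀ P Q : {p : Fin (m + n + 1) → ℕ × ℕ // IsStaircase m n p},
      (staircaseDualGraph m n).Adj P Q →
        (∑ k : Fin m, sVec m n P.1 k) % 2 ≠ (∑ k : Fin m, sVec m n Q.1 k) % 2) ∧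
    (staircaseDualGraph m n).Colorable 2 := by
  have hparity : ∀ P Q : {p : Fin (m + n + 1) → ℕ × ℕ // IsStaircase m n p},
      (staircaseDualGraph m n).Adj P Q →
        (∑ k : Fin m, sVec m n P.1 k) % 2 ≠ (∑ k : Fin m, sVec m n Q.1 k) % 2 := by
    rintro ⟨p, hp⟩ ⟨q, hq⟩ ⟨-, hpq | hqp⟩
    · exact hp.sum_sVec_mod_two_ne hq (hp.existsUnique_ne_of_card_image_inter_image hq hpq)
    · exact (hq.sum_sVec_mod_two_ne hp (hq.existsUnique_ne_of_card_image_inter_image hp hqp)).symm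
  exact ⟨hparity, ⟨.mk (fun P => ⟨(∑ k, sVec m n P.1 k) % 2, Nat.mod_lt _ two_pos⟩)
    fun hPQ h => hparity _ _ hPQ (Fin.val_eq_of_eq h)⟩⟩
end
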